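/- arXiv:1903.10114 — 11 statements merged into one kernel-verified Lean document; each statement's English description precedes it below -/
import Mathlib

section
/- Associativity of the ⊲ operation: Let Q be a complex (q+r)×(q+r) matrix with assigned (q,r) block splitting, R a complex (r+s)×(r+s) matrix with (r,s) block splitting, and S a complex (s+t)×(s+t) matrix with (s,t) block splitting. Assume that (Q,R) is ⊲_r-suitable, (R,S) is ⊲_s-suitable, (Q ⊲_r R, S) is ⊲_s-suitable, and (Q, R ⊲_s S) is ⊲_r-suitable. Then (Q ⊲_r R) ⊲_s S = Q ⊲_r (R ⊲_s S). -/
open Matrix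

noncomputable section

/-- The pair `(Q, R)` (with assigned block splittings) is `⊲`-suitable:
`1 - α̃ δ` is invertible, where `δ` is the lower-right block of `Q` and
`α̃` the upper-left block of `R`. -/
def Suitable {q r s : ℕ}
    (Q : Matrix (Fin q ⊕ Fin r) (Fin q ⊕ Fin r) ℂ)
    (R : Matrix (Fin r ⊕ Fin s) (Fin r ⊕ Fin s) ℂ) : Prop :=
  IsUnit (1 - R.toBlocks₁₁ * Q.toBlocks₂₂)

/-- The operation `Q ⊲_r R` on block matrices. -/
def tri {q r s : ℕ}
    (Q : Matrix (Fin q ⊕ Fin r) (Fin q ⊕ Fin r) ℂ)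
    (R : Matrix (Fin r ⊕ Fin s) (Fin r ⊕ Fin s) ℂ) :
    Matrix (Fin q ⊕ Fin s) (Fin q ⊕ Fin s) ℂ :=
  fromBlocks
    (Q.toBlocks₁₁ +
      Q.toBlocks₁₂ * (1 - R.toBlocks₁₁ * Q.toBlocks₂₂)⁻¹ * R.toBlocks₁₁ * Q.toBlocks₂₁)
    (Q.toBlocks₁₂ * (1 - R.toBlocks₁₁ * Q.toBlocks₂₂)⁻¹ * R.toBlocks₁₂)
    (R.toBlocks₂₁ * (1 - Q.toBlocks₂₂ * R.toBlocks₁₁)⁻¹ * Q.toBlocks₂₁)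
    (R.toBlocks₂₂ +
      R.toBlocks₂₁ * (1 - Q.toBlocks₂₂ * R.toBlocks₁₁)⁻¹ * Q.toBlocks₂₂ * R.toBlocks₁₂)

lemma myIsUnit_comm {n m : Type*} [Fintype n] [Fintype m] [DecidableEq n] [DecidableEq m]
    {A : Matrix n m ℂ} {B : Matrix m n ℂ} (h : IsUnit (1 - A * B)) :
    IsUnit (1 - B * A) := by
  rw [Matrix.isUnit_iff_isUnit_det] at h ⊢
  rwa [← Matrix.det_one_sub_mul_comm]

lemma mySwap {n m : Type*} [Fintype n] [Fintype m] [DecidableEq n] [DecidableEq m]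
    {A : Matrix n m ℂ} {B : Matrix m n ℂ} (h : IsUnit (1 - A * B)) :
    (1 - A * B)⁻¹ * A = A * (1 - B * A)⁻¹ := by
  have h' := myIsUnit_comm h
  have key : A * (1 - B * A) = (1 - A * B) * A := by
    simp [Matrix.mul_sub, Matrix.sub_mul, Matrix.mul_assoc]
  calc (1 - A * B)⁻¹ * A
      = (1 - A * B)⁻¹ * (A * (1 - B * A) * (1 - B * A)⁻¹) := by
        rw [Matrix.mul_assoc A, Matrix.mul_nonsing_inv _ ((Matrix.isUnit_iff_isUnit_det _).mp h'),
          Matrix.mul_one]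
    _ = (1 - A * B)⁻¹ * ((1 - A * B) * (A * (1 - B * A)⁻¹)) := by
        rw [← Matrix.mul_assoc, key, Matrix.mul_assoc, Matrix.mul_assoc]
    _ = A * (1 - B * A)⁻¹ := by
        rw [← Matrix.mul_assoc, Matrix.nonsing_inv_mul _ ((Matrix.isUnit_iff_isUnit_det _).mp h),
          Matrix.one_mul]

lemma myCancel {n p : Type*} [Fintype n] [DecidableEq n] {T : Matrix n n ℂ} (h : IsUnit T)
    {x y : Matrix n p ℂ} (key : T * x = T * y) : x = y := by
  have hd := (Matrix.isUnit_iff_isUnit_det T).mp h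
  calc x = T⁻¹ * (T * x) := by
        rw [← Matrix.mul_assoc, Matrix.nonsing_inv_mul _ hd, Matrix.one_mul]
    _ = T⁻¹ * (T * y) := by rw [key]
    _ = y := by rw [← Matrix.mul_assoc, Matrix.nonsing_inv_mul _ hd, Matrix.one_mul]

/-- Associativity of the `⊲` operation. -/
theorem tri_assoc {q r s t : ℕ}
    (Q : Matrix (Fin q ⊕ Fin r) (Fin q ⊕ Fin r) ℂ)
    (R : Matrix (Fin r ⊕ Fin s) (Fin r ⊕ Fin s) ℂ)
    (S : Matrix (Fin s ⊕ Fin t) (Fin s ⊕ Fin t) ℂ)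
    (hQR : Suitable Q R) (hRS : Suitable R S)
    (hQRS : Suitable (tri Q R) S) (hQRS' : Suitable Q (tri R S)) :
    tri (tri Q R) S = tri Q (tri R S) := by
  simp only [Suitable, tri, toBlocks_fromBlocks₁₁, toBlocks_fromBlocks₁₂,
    toBlocks_fromBlocks₂₁, toBlocks_fromBlocks₂₂, Matrix.mul_assoc] at hQR hRS hQRS hQRS' ⊢
  set a := Q.toBlocks₁₁
  set b := Q.toBlocks₁₂
  set c := Q.toBlocks₂₁
  set d := Q.toBlocks₂₂
  set A := R.toBlocks₁₁
  set B := R.toBlocks₁₂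
  set C := R.toBlocks₂₁
  set D := R.toBlocks₂₂
  set P := S.toBlocks₁₁
  set L := S.toBlocks₁₂
  set M := S.toBlocks₂₁
  set N := S.toBlocks₂₂
  set X := (1 - A * d)⁻¹ with hXdef
  set X' := (1 - d * A)⁻¹ with hX'def
  set Y := (1 - P * D)⁻¹ with hYdef
  set Y' := (1 - D * P)⁻¹ with hY'def
  set U := (1 - P * (D + C * (X' * (d * B))))⁻¹ with hUdef
  set U' := (1 - (D + C * (X' * (d * B))) * P)⁻¹ with hU'def
  set V := (1 - (A + B * (Y * (P * C))) * d)⁻¹ with hVdef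
  set V' := (1 - d * (A + B * (Y * (P * C))))⁻¹ with hV'def
  -- unit hypotheses
  have hX'u0 : IsUnit (1 - d * A) := myIsUnit_comm hQR
  have hY'u0 : IsUnit (1 - D * P) := myIsUnit_comm hRS
  have hU'u0 : IsUnit (1 - (D + C * (X' * (d * B))) * P) := myIsUnit_comm hQRS
  have hV'u0 : IsUnit (1 - d * (A + B * (Y * (P * C)))) := myIsUnit_comm hQRS'
  -- basic inverse identities
  have iX : X * (1 - A * d) = 1 :=
    Matrix.nonsing_inv_mul _ ((Matrix.isUnit_iff_isUnit_det _).mp hQR)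
  have iX' : X' * (1 - d * A) = 1 :=
    Matrix.nonsing_inv_mul _ ((Matrix.isUnit_iff_isUnit_det _).mp hX'u0)
  have iY : Y * (1 - P * D) = 1 :=
    Matrix.nonsing_inv_mul _ ((Matrix.isUnit_iff_isUnit_det _).mp hRS)
  have iY' : Y' * (1 - D * P) = 1 :=
    Matrix.nonsing_inv_mul _ ((Matrix.isUnit_iff_isUnit_det _).mp hY'u0)
  have iU : (1 - P * (D + C * (X' * (d * B)))) * U = 1 :=
    Matrix.mul_nonsing_inv _ ((Matrix.isUnit_iff_isUnit_det _).mp hQRS)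
  have iU' : (1 - (D + C * (X' * (d * B))) * P) * U' = 1 :=
    Matrix.mul_nonsing_inv _ ((Matrix.isUnit_iff_isUnit_det _).mp hU'u0)
  have iV : (1 - (A + B * (Y * (P * C))) * d) * V = 1 :=
    Matrix.mul_nonsing_inv _ ((Matrix.isUnit_iff_isUnit_det _).mp hQRS')
  have iV' : (1 - d * (A + B * (Y * (P * C)))) * V' = 1 :=
    Matrix.mul_nonsing_inv _ ((Matrix.isUnit_iff_isUnit_det _).mp hV'u0)
  have hXu : IsUnit X := Matrix.isUnit_nonsing_inv_iff.mpr hQR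
  have hX'u : IsUnit X' := Matrix.isUnit_nonsing_inv_iff.mpr hX'u0
  have hYu : IsUnit Y := Matrix.isUnit_nonsing_inv_iff.mpr hRS
  have hY'u : IsUnit Y' := Matrix.isUnit_nonsing_inv_iff.mpr hY'u0
  -- commutation facts
  have f1 : X' * d = d * X := mySwap hX'u0
  have f2 : Y * P = P * Y' := mySwap hRS
  have f1q : ∀ {p : Type} (W : Matrix (Fin r) p ℂ), d * (X * W) = X' * (d * W) := by
    intro p W
    rw [← Matrix.mul_assoc, ← f1, Matrix.mul_assoc]
  have f2q : ∀ {p : Type} (W : Matrix (Fin s) p ℂ), P * (Y' * W) = Y * (P * W) := by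
    intro p W
    rw [← Matrix.mul_assoc, ← f2, Matrix.mul_assoc]
  -- "minus one" rules
  have mXg : X * (A * d) = X - 1 := by
    have h := iX
    rw [Matrix.mul_sub, Matrix.mul_one] at h
    rw [← h]; abel
  have mX'g : X' * (d * A) = X' - 1 := by
    have h := iX'
    rw [Matrix.mul_sub, Matrix.mul_one] at h
    rw [← h]; abel
  have mYg : Y * (P * D) = Y - 1 := by
    have h := iY
    rw [Matrix.mul_sub, Matrix.mul_one] at h
    rw [← h]; abel
  have mY'g : Y' * (D * P) = Y' - 1 := by
    have h := iY'
    rw [Matrix.mul_sub, Matrix.mul_one] at h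
    rw [← h]; abel
  -- factorization facts and the four key resolvent identities
  have hZfact : (1 : Matrix (Fin r) (Fin r) ℂ) - X * (B * (Y * (P * (C * d))))
      = X * (1 - (A + B * (Y * (P * C))) * d) := by
    simp only [Matrix.mul_sub, Matrix.mul_add, Matrix.add_mul, Matrix.mul_one,
      Matrix.mul_assoc, mXg]
    abel
  have hZ'fact : (1 : Matrix (Fin r) (Fin r) ℂ) - X' * (d * (B * (Y * (P * C))))
      = X' * (1 - d * (A + B * (Y * (P * C)))) := by
    simp only [Matrix.mul_sub, Matrix.mul_add, Matrix.add_mul, Matrix.mul_one,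
      Matrix.mul_assoc, mX'g]
    abel
  have hWfact : (1 : Matrix (Fin s) (Fin s) ℂ) - Y * (P * (C * (X' * (d * B))))
      = Y * (1 - P * (D + C * (X' * (d * B)))) := by
    simp only [Matrix.mul_sub, Matrix.mul_add, Matrix.add_mul, Matrix.mul_one,
      Matrix.mul_assoc, mYg]
    abel
  have hW'fact : (1 : Matrix (Fin s) (Fin s) ℂ) - Y' * (C * (X' * (d * (B * P))))
      = Y' * (1 - (D + C * (X' * (d * B))) * P) := by
    simp only [Matrix.mul_sub, Matrix.mul_add, Matrix.add_mul, Matrix.mul_one,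
      Matrix.mul_assoc, mY'g]
    abel
  have hZu : IsUnit ((1 : Matrix (Fin r) (Fin r) ℂ) - X * (B * (Y * (P * (C * d))))) := by
    rw [hZfact]; exact hXu.mul hQRS'
  have hW'u : IsUnit ((1 : Matrix (Fin s) (Fin s) ℂ) - Y' * (C * (X' * (d * (B * P))))) := by
    rw [hW'fact]; exact hY'u.mul hU'u0
  have rV : (1 - X * (B * (Y * (P * (C * d))))) * V = X := by
    rw [hZfact, Matrix.mul_assoc, iV, Matrix.mul_one]
  have rV' : (1 - X' * (d * (B * (Y * (P * C))))) * V' = X' := by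
    rw [hZ'fact, Matrix.mul_assoc, iV', Matrix.mul_one]
  have rU : (1 - Y * (P * (C * (X' * (d * B))))) * U = Y := by
    rw [hWfact, Matrix.mul_assoc, iU, Matrix.mul_one]
  have rU' : (1 - Y' * (C * (X' * (d * (B * P))))) * U' = Y' := by
    rw [hW'fact, Matrix.mul_assoc, iU', Matrix.mul_one]
  have rVq : ∀ {p : Type} (W : Matrix (Fin r) p ℂ),
      X * (B * (Y * (P * (C * (d * (V * W)))))) = V * W - X * W := by
    intro p W
    have h := congrArg (fun Z => Z * W) rV
    simp only [Matrix.sub_mul, Matrix.one_mul, Matrix.mul_assoc] at h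
    rw [← h]; abel
  have rV'q : ∀ {p : Type} (W : Matrix (Fin r) p ℂ),
      X' * (d * (B * (Y * (P * (C * (V' * W)))))) = V' * W - X' * W := by
    intro p W
    have h := congrArg (fun Z => Z * W) rV'
    simp only [Matrix.sub_mul, Matrix.one_mul, Matrix.mul_assoc] at h
    rw [← h]; abel
  have rUq : ∀ {p : Type} (W : Matrix (Fin s) p ℂ),
      Y * (P * (C * (X' * (d * (B * (U * W)))))) = U * W - Y * W := by
    intro p W
    have h := congrArg (fun Z => Z * W) rU
    simp only [Matrix.sub_mul, Matrix.one_mul, Matrix.mul_assoc] at h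
    rw [← h]; abel
  have rU'q : ∀ {p : Type} (W : Matrix (Fin s) p ℂ),
      Y' * (C * (X' * (d * (B * (P * (U' * W)))))) = U' * W - Y' * W := by
    intro p W
    have h := congrArg (fun Z => Z * W) rU'
    simp only [Matrix.sub_mul, Matrix.one_mul, Matrix.mul_assoc] at h
    rw [← h]; abel
  -- core identities
  have core12q : ∀ {p : Type} (W : Matrix (Fin s) p ℂ),
      X * (B * (U * W)) = V * (B * (Y * W)) := by
    intro p W
    apply myCancel hZu
    simp only [Matrix.sub_mul, Matrix.one_mul, Matrix.mul_assoc, f1q, rUq, rVq, Matrix.mul_sub]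
    abel
  have core21q : ∀ {p : Type} (W : Matrix (Fin r) p ℂ),
      U' * (C * (X' * W)) = Y' * (C * (V' * W)) := by
    intro p W
    apply myCancel hW'u
    simp only [Matrix.sub_mul, Matrix.one_mul, Matrix.mul_assoc, rU'q, f2q, rV'q, Matrix.mul_sub]
    abel
  have fVq : ∀ {p : Type} (W : Matrix (Fin r) p ℂ),
      V * (B * (Y * (P * (C * (d * (X * W)))))) = V * W - X * W := by
    intro p W
    apply myCancel hZu
    simp only [Matrix.mul_sub, Matrix.sub_mul, Matrix.one_mul, Matrix.mul_assoc, rVq]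
    abel
  have gU' : U' = Y' + Y' * (C * (V' * (d * (B * (P * Y'))))) := by
    apply myCancel hW'u
    rw [rU', Matrix.mul_add]
    simp only [Matrix.sub_mul, Matrix.one_mul, Matrix.mul_assoc, f2q, rV'q, Matrix.mul_sub]
    abel
  have fU'q : ∀ {p : Type} (W : Matrix (Fin s) p ℂ),
      U' * W = Y' * W + Y' * (C * (V' * (d * (B * (P * (Y' * W)))))) := by
    intro p W
    have h := congrArg (fun Z => Z * W) gU'
    simpa only [Matrix.add_mul, Matrix.mul_assoc] using h
  have gX' : X' = 1 + d * (X * A) := by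
    have h1 : X' - X' * (d * A) = 1 := by
      have h := iX'
      rwa [Matrix.mul_sub, Matrix.mul_one] at h
    have h2 : X' * (d * A) = d * (X * A) := by
      rw [← Matrix.mul_assoc, f1, Matrix.mul_assoc]
    rw [← h2, ← h1]; abel
  have fX'q : ∀ {p : Type} (W : Matrix (Fin r) p ℂ), X' * W = W + d * (X * (A * W)) := by
    intro p W
    have h := congrArg (fun Z => Z * W) gX'
    simpa only [Matrix.add_mul, Matrix.one_mul, Matrix.mul_assoc] using h
  have gY : Y = 1 + P * (Y' * D) := by
    have h1 : Y - Y * (P * D) = 1 := by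
      have h := iY
      rwa [Matrix.mul_sub, Matrix.mul_one] at h
    have h2 : Y * (P * D) = P * (Y' * D) := by
      rw [← Matrix.mul_assoc, f2, Matrix.mul_assoc]
    rw [← h2, ← h1]; abel
  have fYq : ∀ {p : Type} (W : Matrix (Fin s) p ℂ), Y * W = W + P * (Y' * (D * W)) := by
    intro p W
    have h := congrArg (fun Z => Z * W) gY
    simpa only [Matrix.add_mul, Matrix.one_mul, Matrix.mul_assoc] using h
  -- the four block identities
  rw [Matrix.fromBlocks_inj]
  refine ⟨?_, ?_, ?_, ?_⟩
  · -- block 11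
    simp only [core12q, fX'q, fVq, Matrix.add_mul, Matrix.mul_add, Matrix.mul_sub,
      Matrix.mul_assoc]
    abel
  · -- block 12
    simp only [core12q]
  · -- block 21
    simp only [core21q]
  · -- block 22
    simp only [Matrix.add_mul, Matrix.mul_add, Matrix.mul_assoc]
    simp only [core21q]
    simp only [fU'q, fYq, Matrix.mul_add, Matrix.mul_assoc]
    abel

end
end

section
/- Partial semigroup property of the positive-imaginary-part matrices: If Q ∈ 𝓜(q,r,+) and R ∈ 𝓜(r,s,+), then the pair (Q,R) is ⊲_r-suitable (i.e. 1_r − α̃δ is invertible, where δ is the lower-right r×r block of Q and α̃ is the upper-left r×r block of R) and Q ⊲_r R ∈ 𝓜(q,s,+). The same statement holds with 𝓜(·,·,−) := −𝓜(·,·,+) in place of 𝓜(·,·,+) throughout. -/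
/-!
`⊲_r` is a Redheffer star product: given `x, y`, the coupling equations `u = α̃ w + β̃ y`,
`w = γ x + δ u` are solvable when `1 - α̃ δ` is invertible, and then `Q (x, u) = (X, w)`,
`R (w, y) = (u, Y)` and `(Q ⊲_r R) (x, y) = (X, Y)`. Adding the two quadratic forms, the cross
terms `⟪u, w⟫ + ⟪w, u⟫` are real, so
`Im ⟪(x, y), (Q ⊲_r R) (x, y)⟫ = Im ⟪(x, u), Q (x, u)⟫ + Im ⟪(w, y), R (w, y)⟫`,
and the three positivity conditions on `Q ⊲_r R` follow from those on `Q` and `R`.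
If `v = α̃ δ v ≠ 0`, then `Im ⟪δ v, α̃ δ v⟫ = Im ⟪δ v, v⟫ = -Im ⟪v, δ v⟫`, so `Im α̃` and `Im δ` cannot
both be positive definite. The case of `𝓜(·,·,−)` reduces to `𝓜(·,·,+)`: conjugating by
`diag(1, -1)` turns `(-Q) ⊲_r (-R)` into `-(Q ⊲_r R)` and preserves `𝓜(·,·,+)`.
-/

open Matrix
open scoped ComplexOrder

noncomputable section

/-- The imaginary part `(M − M^*)/(2i)` of a square complex matrix. -/
def matIm {n : Type*} (M : Matrix n n ℂ) : Matrix n n ℂ :=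
  (2 * Complex.I)⁻¹ • (M - Mᴴ)

/-- `Q ∈ 𝓜(q,r,+)`: `Im(α)` and `Im(δ)` are positive definite and `Im(Q)` is
positive semidefinite. -/
def MPlus {q r : ℕ} (Q : Matrix (Fin q ⊕ Fin r) (Fin q ⊕ Fin r) ℂ) : Prop :=
  (matIm Q.toBlocks₁₁).PosDef ∧ (matIm Q.toBlocks₂₂).PosDef ∧ (matIm Q).PosSemidef

/-- `Q ∈ 𝓜(q,r,−) := −𝓜(q,r,+)`. -/
def MMinus {q r : ℕ} (Q : Matrix (Fin q ⊕ Fin r) (Fin q ⊕ Fin r) ℂ) : Prop :=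
  MPlus (-Q)

open LieAlgebra.Orthogonal (indefiniteDiagonal)

namespace Matrix

variable {l m n o α : Type*} [Neg α] (M : Matrix (n ⊕ o) (l ⊕ m) α)

theorem toBlocks₁₁_neg : (-M).toBlocks₁₁ = -M.toBlocks₁₁ := rfl
theorem toBlocks₁₂_neg : (-M).toBlocks₁₂ = -M.toBlocks₁₂ := rfl
theorem toBlocks₂₁_neg : (-M).toBlocks₂₁ = -M.toBlocks₂₁ := rfl
theorem toBlocks₂₂_neg : (-M).toBlocks₂₂ = -M.toBlocks₂₂ := rfl

end Matrix

variable {m n p : Type*} [Fintype m] [Fintype n] [Fintype p]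

def imForm (M : Matrix n n ℂ) (z : n → ℂ) : ℝ :=
  (star z ⬝ᵥ M *ᵥ z).im

theorem dotProduct_matIm_mulVec (M : Matrix n n ℂ) (z : n → ℂ) :
    star z ⬝ᵥ matIm M *ᵥ z = imForm M z := by
  rw [matIm, smul_mulVec, dotProduct_smul, sub_mulVec, dotProduct_sub, mulVec_conjTranspose,
    dotProduct_star, star_star, dotProduct_mulVec, smul_eq_mul, Complex.star_def,
    Complex.sub_conj, imForm, dotProduct_mulVec]
  push_cast
  field_simp

omit [Fintype n] in
theorem matIm_isHermitian (M : Matrix n n ℂ) : (matIm M).IsHermitian := by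
  rw [IsHermitian, matIm, conjTranspose_smul, conjTranspose_sub, conjTranspose_conjTranspose,
    ← neg_sub M, smul_neg, ← neg_smul, star_inv₀, star_mul', Complex.star_def, Complex.conj_I,
    Complex.conj_ofNat, mul_neg, inv_neg, neg_neg]

theorem posDef_matIm_iff (M : Matrix n n ℂ) :
    (matIm M).PosDef ↔ ∀ z ≠ 0, 0 < imForm M z := by
  simp only [posDef_iff_dotProduct_mulVec, matIm_isHermitian, dotProduct_matIm_mulVec,
    Complex.zero_lt_real, true_and]

theorem posSemidef_matIm_iff (M : Matrix n n ℂ) :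
    (matIm M).PosSemidef ↔ ∀ z, 0 ≤ imForm M z := by
  simp only [posSemidef_iff_dotProduct_mulVec, matIm_isHermitian, dotProduct_matIm_mulVec,
    Complex.zero_le_real, true_and]

theorem imForm_zero (M : Matrix n n ℂ) : imForm M 0 = 0 := by
  simp [imForm]

theorem isUnit_one_sub_mul_of_posDef_matIm [DecidableEq n] {A D : Matrix n n ℂ}
    (hA : (matIm A).PosDef) (hD : (matIm D).PosDef) : IsUnit (1 - A * D) := by
  rw [posDef_matIm_iff] at hA hD
  rw [isUnit_iff_isUnit_det, isUnit_iff_ne_zero]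
  intro hdet
  obtain ⟨v, hv, hfix⟩ := exists_mulVec_eq_zero_iff.2 hdet
  rw [sub_mulVec, one_mulVec, sub_eq_zero, ← mulVec_mulVec] at hfix
  have hDv : D *ᵥ v ≠ 0 := fun h => hv (by rw [hfix, h, mulVec_zero])
  have hconj : imForm A (D *ᵥ v) = -imForm D v := by
    rw [imForm, imForm, ← hfix, star_dotProduct, Complex.star_def, Complex.conj_im]
  linarith [hA _ hDv, hD v hv]

theorem mulVec_sumElim (M : Matrix (m ⊕ n) (m ⊕ n) ℂ) (x : m → ℂ) (y : n → ℂ) :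
    M *ᵥ (x ⊕ᵥ y) =
      (M.toBlocks₁₁ *ᵥ x + M.toBlocks₁₂ *ᵥ y) ⊕ᵥ (M.toBlocks₂₁ *ᵥ x + M.toBlocks₂₂ *ᵥ y) := by
  conv_lhs => rw [← fromBlocks_toBlocks M]
  rw [fromBlocks_mulVec, Sum.elim_comp_inl, Sum.elim_comp_inr]

theorem imForm_sumElim_zero (M : Matrix (m ⊕ n) (m ⊕ n) ℂ) (x : m → ℂ) :
    imForm M (x ⊕ᵥ 0) = imForm M.toBlocks₁₁ x := by
  simp [imForm, mulVec_sumElim, Function.star_sumElim]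

theorem imForm_zero_sumElim (M : Matrix (m ⊕ n) (m ⊕ n) ℂ) (y : n → ℂ) :
    imForm M (0 ⊕ᵥ y) = imForm M.toBlocks₂₂ y := by
  simp [imForm, mulVec_sumElim, Function.star_sumElim]

theorem imForm_add_of_coupled {Q : Matrix (m ⊕ n) (m ⊕ n) ℂ} {R : Matrix (n ⊕ p) (n ⊕ p) ℂ}
    {T : Matrix (m ⊕ p) (m ⊕ p) ℂ} {x X : m → ℂ} {u w : n → ℂ} {y Y : p → ℂ}
    (hQ : Q *ᵥ (x ⊕ᵥ u) = X ⊕ᵥ w) (hR : R *ᵥ (w ⊕ᵥ y) = u ⊕ᵥ Y)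
    (hT : T *ᵥ (x ⊕ᵥ y) = X ⊕ᵥ Y) :
    imForm T (x ⊕ᵥ y) = imForm Q (x ⊕ᵥ u) + imForm R (w ⊕ᵥ y) := by
  have hcross : star w ⬝ᵥ u = star (star u ⬝ᵥ w) := star_dotProduct w u
  simp only [imForm, hQ, hR, hT, Function.star_sumElim, sumElim_dotProduct_sumElim,
    Complex.add_im, hcross, Complex.star_def, Complex.conj_im]
  ring

theorem mPlus_iff {q r : ℕ} (M : Matrix (Fin q ⊕ Fin r) (Fin q ⊕ Fin r) ℂ) :
    MPlus M ↔ (∀ x ≠ 0, 0 < imForm M (x ⊕ᵥ 0)) ∧ (∀ y ≠ 0, 0 < imForm M (0 ⊕ᵥ y)) ∧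
      ∀ z, 0 ≤ imForm M z := by
  simp only [MPlus, posDef_matIm_iff, posSemidef_matIm_iff, imForm_sumElim_zero,
    imForm_zero_sumElim]

theorem imForm_indefiniteDiagonal_conj [DecidableEq m] [DecidableEq n]
    (M : Matrix (m ⊕ n) (m ⊕ n) ℂ) (x : m → ℂ) (y : n → ℂ) :
    imForm (indefiniteDiagonal m n ℂ * M * indefiniteDiagonal m n ℂ) (x ⊕ᵥ y) =
      imForm M (x ⊕ᵥ -y) := by
  have hright : indefiniteDiagonal m n ℂ *ᵥ (x ⊕ᵥ y) = x ⊕ᵥ -y := by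
    ext (i | i) <;> simp [indefiniteDiagonal, mulVec_diagonal]
  have hleft : star (x ⊕ᵥ y) ᵥ* indefiniteDiagonal m n ℂ = star (x ⊕ᵥ -y) := by
    ext (i | i) <;> simp [indefiniteDiagonal, vecMul_diagonal]
  rw [imForm, imForm, ← mulVec_mulVec, ← mulVec_mulVec, hright, dotProduct_mulVec, hleft]

section

variable {q r s : ℕ} {Q : Matrix (Fin q ⊕ Fin r) (Fin q ⊕ Fin r) ℂ}
  {R : Matrix (Fin r ⊕ Fin s) (Fin r ⊕ Fin s) ℂ}

theorem Suitable.exists_coupled (h : Suitable Q R) (x : Fin q → ℂ) (y : Fin s → ℂ) :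
    ∃ (X : Fin q → ℂ) (u w : Fin r → ℂ) (Y : Fin s → ℂ),
      Q *ᵥ (x ⊕ᵥ u) = X ⊕ᵥ w ∧ R *ᵥ (w ⊕ᵥ y) = u ⊕ᵥ Y ∧
      tri Q R *ᵥ (x ⊕ᵥ y) = X ⊕ᵥ Y := by
  set a := Q.toBlocks₁₁; set b := Q.toBlocks₁₂; set c := Q.toBlocks₂₁; set d := Q.toBlocks₂₂
  set a' := R.toBlocks₁₁; set b' := R.toBlocks₁₂; set c' := R.toBlocks₂₁; set d' := R.toBlocks₂₂
  have hdet : IsUnit (1 - a' * d).det := (isUnit_iff_isUnit_det _).1 h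
  have hdet' : IsUnit (1 - d * a').det := by rwa [det_one_sub_mul_comm]
  set u := (1 - a' * d)⁻¹ *ᵥ (a' *ᵥ (c *ᵥ x) + b' *ᵥ y) with hu_def
  set w := c *ᵥ x + d *ᵥ u with hw_def
  have hu : u = a' *ᵥ w + b' *ᵥ y := by
    have h1 : (1 - a' * d) *ᵥ u = a' *ᵥ (c *ᵥ x) + b' *ᵥ y := by
      rw [hu_def, mulVec_mulVec, mul_nonsing_inv _ hdet, one_mulVec]
    rw [sub_mulVec, one_mulVec, sub_eq_iff_eq_add] at h1
    conv_lhs => rw [h1]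
    simp only [hw_def, mulVec_add, mulVec_mulVec]
    abel
  have hw : w = (1 - d * a')⁻¹ *ᵥ (c *ᵥ x + (d * b') *ᵥ y) := by
    have h1 : (1 - d * a') *ᵥ w = c *ᵥ x + (d * b') *ᵥ y := by
      rw [sub_mulVec, one_mulVec, sub_eq_iff_eq_add]
      conv_lhs => rw [hw_def, hu]
      simp only [mulVec_add, mulVec_mulVec]
      abel
    rw [← h1, mulVec_mulVec, nonsing_inv_mul _ hdet', one_mulVec]
  refine ⟨a *ᵥ x + b *ᵥ u, u, w, c' *ᵥ w + d' *ᵥ y, mulVec_sumElim Q x u,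
    by rw [mulVec_sumElim, ← hu], ?_⟩
  rw [tri, fromBlocks_mulVec, Sum.elim_comp_inl, Sum.elim_comp_inr]
  congr 1
  · rw [hu_def]
    simp only [add_mulVec, mulVec_add, mulVec_mulVec, Matrix.mul_assoc]
    abel
  · rw [hw]
    simp only [add_mulVec, mulVec_add, mulVec_mulVec, Matrix.mul_assoc]
    abel

theorem Suitable.exists_imForm_tri (h : Suitable Q R) (x : Fin q → ℂ) (y : Fin s → ℂ) :
    ∃ u w : Fin r → ℂ, (x = 0 → u = 0 → w = 0) ∧ (w = 0 → y = 0 → u = 0) ∧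
      imForm (tri Q R) (x ⊕ᵥ y) = imForm Q (x ⊕ᵥ u) + imForm R (w ⊕ᵥ y) := by
  obtain ⟨X, u, w, Y, hQ, hR, hT⟩ := h.exists_coupled x y
  refine ⟨u, w, ?_, ?_, imForm_add_of_coupled hQ hR hT⟩
  · rintro rfl rfl
    simpa using congrArg (· ∘ Sum.inr) hQ.symm
  · rintro rfl rfl
    simpa using congrArg (· ∘ Sum.inl) hR.symm

theorem MPlus.suitable (hQ : MPlus Q) (hR : MPlus R) : Suitable Q R :=
  isUnit_one_sub_mul_of_posDef_matIm hR.1 hQ.2.1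

theorem MPlus.tri (hQ : MPlus Q) (hR : MPlus R) : MPlus (tri Q R) := by
  have hS := hQ.suitable hR
  rw [mPlus_iff] at hQ hR ⊢
  obtain ⟨hQ₁, hQ₂, hQ₀⟩ := hQ
  obtain ⟨hR₁, hR₂, hR₀⟩ := hR
  refine ⟨fun x hx => ?_, fun y hy => ?_, fun z => ?_⟩
  · obtain ⟨u, w, -, hu, hsplit⟩ := hS.exists_imForm_tri x 0
    rw [hsplit]
    by_cases hw : w = 0
    · obtain rfl := hu hw rfl
      simpa [hw, Sum.elim_zero_zero, imForm_zero] using hQ₁ x hx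
    · exact add_pos_of_nonneg_of_pos (hQ₀ _) (hR₁ w hw)
  · obtain ⟨u, w, hw, -, hsplit⟩ := hS.exists_imForm_tri 0 y
    rw [hsplit]
    by_cases hu : u = 0
    · obtain rfl := hw rfl hu
      simpa [hu, Sum.elim_zero_zero, imForm_zero] using hR₂ y hy
    · exact add_pos_of_pos_of_nonneg (hQ₂ u hu) (hR₀ _)
  · obtain ⟨u, w, -, -, hsplit⟩ := hS.exists_imForm_tri (z ∘ Sum.inl) (z ∘ Sum.inr)
    rw [← Sum.elim_comp_inl_inr z, hsplit]
    exact add_nonneg (hQ₀ _) (hR₀ _)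

theorem MPlus.indefiniteDiagonal_conj {M : Matrix (Fin q ⊕ Fin r) (Fin q ⊕ Fin r) ℂ}
    (h : MPlus M) : MPlus (indefiniteDiagonal (Fin q) (Fin r) ℂ * M *
      indefiniteDiagonal (Fin q) (Fin r) ℂ) := by
  rw [mPlus_iff] at h ⊢
  obtain ⟨h₁, h₂, h₀⟩ := h
  refine ⟨fun x hx => ?_, fun y hy => ?_, fun z => ?_⟩
  · simpa [imForm_indefiniteDiagonal_conj] using h₁ x hx
  · simpa [imForm_indefiniteDiagonal_conj] using h₂ (-y) (neg_ne_zero.2 hy)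
  · rw [← Sum.elim_comp_inl_inr z, imForm_indefiniteDiagonal_conj]
    exact h₀ _

theorem indefiniteDiagonal_conj_tri_neg :
    indefiniteDiagonal (Fin q) (Fin s) ℂ * tri (-Q) (-R) *
      indefiniteDiagonal (Fin q) (Fin s) ℂ = -tri Q R := by
  ext (i | i) (j | j) <;>
    simp [tri, indefiniteDiagonal, diagonal_mul, mul_diagonal, toBlocks₁₁_neg,
      toBlocks₁₂_neg, toBlocks₂₁_neg, toBlocks₂₂_neg, add_comm]

theorem MMinus.suitable (hQ : MMinus Q) (hR : MMinus R) : Suitable Q R := by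
  simpa [Suitable, toBlocks₁₁_neg, toBlocks₂₂_neg] using MPlus.suitable hQ hR

theorem MMinus.tri (hQ : MMinus Q) (hR : MMinus R) : MMinus (tri Q R) := by
  have h := (MPlus.tri hQ hR).indefiniteDiagonal_conj
  rwa [indefiniteDiagonal_conj_tri_neg] at h

end

/-- Partial semigroup property: if `Q ∈ 𝓜(q,r,+)` and `R ∈ 𝓜(r,s,+)` then
`(Q,R)` is `⊲`-suitable and `Q ⊲ R ∈ 𝓜(q,s,+)`, and the same holds with
`𝓜(·,·,−)` in place of `𝓜(·,·,+)`. -/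
theorem mplus_partial_semigroup {q r s : ℕ}
    (Q : Matrix (Fin q ⊕ Fin r) (Fin q ⊕ Fin r) ℂ)
    (R : Matrix (Fin r ⊕ Fin s) (Fin r ⊕ Fin s) ℂ) :
    (MPlus Q → MPlus R → Suitable Q R ∧ MPlus (tri Q R)) ∧
    (MMinus Q → MMinus R → Suitable Q R ∧ MMinus (tri Q R)) :=
  ⟨fun hQ hR => ⟨hQ.suitable hR, hQ.tri hR⟩, fun hQ hR => ⟨hQ.suitable hR, hQ.tri hR⟩⟩

end
end

section
/- Block-resolvent formula for the ⊲ operation: Let Γ₁ ∈ ℂ^{n₁×n₁} and Γ₂ ∈ ℂ^{n₂×n₂} be invertible matrices, Υ ∈ ℂ^{n₁×q}, Φ ∈ ℂ^{n₁×r}, Υ̃ ∈ ℂ^{n₂×r}, Φ̃ ∈ ℂ^{n₂×s}. Define Q = [[Υ^*Γ₁Υ, Υ^*Γ₁Φ],[Φ^*Γ₁Υ, Φ^*Γ₁Φ]] ∈ ℂ^{(q+r)×(q+r)} with (q,r) splitting and R = [[Υ̃^*Γ₂Υ̃, Υ̃^*Γ₂Φ̃],[Φ̃^*Γ₂Υ̃,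 Φ̃^*Γ₂Φ̃]] ∈ ℂ^{(r+s)×(r+s)} with (r,s) splitting. If (Q,R) is ⊲_r-suitable and the block matrix M = [[Γ₁^{-1}, −ΦΥ̃^*],[−Υ̃Φ^*, Γ₂^{-1}]] ∈ ℂ^{(n₁+n₂)×(n₁+n₂)} is invertible, then Q ⊲_r R = [[Υ^*, 0],[0, Φ̃^*]] · M^{-1} · [[Υ, 0],[0, Φ̃]]. -/
open Matrix

noncomputable section

theorem aux {n₁ n₂ q r s : ℕ}
    (Γ₁ : Matrix (Fin n₁) (Fin n₁) ℂ) (Γ₂ : Matrix (Fin n₂) (Fin n₂) ℂ)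
    (hΓ₁ : IsUnit Γ₁) (hΓ₂ : IsUnit Γ₂)
    (Υ : Matrix (Fin n₁) (Fin q) ℂ) (Φ : Matrix (Fin n₁) (Fin r) ℂ)
    (Υt : Matrix (Fin n₂) (Fin r) ℂ) (Φt : Matrix (Fin n₂) (Fin s) ℂ)
    (a d E : Matrix (Fin r) (Fin r) ℂ)
    (ha : Υtᴴ * Γ₂ * Υt = a) (hd : Φᴴ * Γ₁ * Φ = d)
    (hE1 : (1 - a * d) * E = 1) (hE2 : E * (1 - a * d) = 1)
    (M : Matrix (Fin n₁ ⊕ Fin n₂) (Fin n₁ ⊕ Fin n₂) ℂ)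
    (hM : M = fromBlocks Γ₁⁻¹ (-(Φ * Υtᴴ)) (-(Υt * Φᴴ)) Γ₂⁻¹) :
    fromBlocks Υᴴ 0 0 Φtᴴ * M⁻¹ * fromBlocks Υ 0 0 Φt =
      fromBlocks
        (Υᴴ * Γ₁ * Υ + Υᴴ * Γ₁ * Φ * E * a * (Φᴴ * Γ₁ * Υ))
        (Υᴴ * Γ₁ * Φ * E * (Υtᴴ * Γ₂ * Φt))
        (Φtᴴ * Γ₂ * Υt * (1 + d * E * a) * (Φᴴ * Γ₁ * Υ))
        (Φtᴴ * Γ₂ * Φt + Φtᴴ * Γ₂ * Υt * (1 + d * E * a) * d * (Υtᴴ * Γ₂ * Φt)) := by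
  have hg1t : Γ₁⁻¹ * Γ₁ = 1 :=
    Matrix.nonsing_inv_mul _ ((Matrix.isUnit_iff_isUnit_det _).mp hΓ₁)
  have hg2t : Γ₂⁻¹ * Γ₂ = 1 :=
    Matrix.nonsing_inv_mul _ ((Matrix.isUnit_iff_isUnit_det _).mp hΓ₂)
  have hg1 : ∀ {m : Type} (x : Matrix (Fin n₁) m ℂ), Γ₁⁻¹ * (Γ₁ * x) = x := by
    intro m x; rw [← Matrix.mul_assoc, hg1t, Matrix.one_mul]
  have hg2 : ∀ {m : Type} (x : Matrix (Fin n₂) m ℂ), Γ₂⁻¹ * (Γ₂ * x) = x := by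
    intro m x; rw [← Matrix.mul_assoc, hg2t, Matrix.one_mul]
  have hdt : Φᴴ * (Γ₁ * Φ) = d := by rw [← Matrix.mul_assoc, hd]
  have hat : Υtᴴ * (Γ₂ * Υt) = a := by rw [← Matrix.mul_assoc, ha]
  have hd' : ∀ {m : Type} (x : Matrix (Fin r) m ℂ), Φᴴ * (Γ₁ * (Φ * x)) = d * x := by
    intro m x; rw [← Matrix.mul_assoc, ← Matrix.mul_assoc, hd]
  have ha' : ∀ {m : Type} (x : Matrix (Fin r) m ℂ), Υtᴴ * (Γ₂ * (Υt * x)) = a * x := by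
    intro m x; rw [← Matrix.mul_assoc, ← Matrix.mul_assoc, ha]
  have he3 : a * (d * E) = E - 1 := by
    rw [sub_mul, one_mul] at hE1
    rw [← Matrix.mul_assoc, eq_sub_iff_add_eq, ← hE1]; abel
  have he4 : E * (a * d) = E - 1 := by
    rw [mul_sub, mul_one] at hE2
    rw [eq_sub_iff_add_eq, ← hE2]; abel
  have he : ∀ {m : Type} (x : Matrix (Fin r) m ℂ), a * (d * (E * x)) = E * x - x := by
    intro m x
    rw [← Matrix.mul_assoc, ← Matrix.mul_assoc, Matrix.mul_assoc a d E, he3, Matrix.sub_mul,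
      Matrix.one_mul]
  have he2' : ∀ {m : Type} (x : Matrix (Fin r) m ℂ), E * (a * (d * x)) = E * x - x := by
    intro m x
    rw [← Matrix.mul_assoc, ← Matrix.mul_assoc, Matrix.mul_assoc E a d, he4, Matrix.sub_mul,
      Matrix.one_mul]
  have hMinv : M⁻¹ = fromBlocks
      (Γ₁ + Γ₁ * Φ * Υtᴴ * (Γ₂ + Γ₂ * Υt * d * E * Υtᴴ * Γ₂) * Υt * Φᴴ * Γ₁)
      (Γ₁ * Φ * Υtᴴ * (Γ₂ + Γ₂ * Υt * d * E * Υtᴴ * Γ₂))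
      ((Γ₂ + Γ₂ * Υt * d * E * Υtᴴ * Γ₂) * Υt * Φᴴ * Γ₁)
      (Γ₂ + Γ₂ * Υt * d * E * Υtᴴ * Γ₂) := by
    refine Matrix.inv_eq_right_inv ?_
    rw [hM, fromBlocks_multiply, ← fromBlocks_one]
    refine Matrix.fromBlocks_inj.mpr ⟨?_, ?_, ?_, ?_⟩ <;>
      · simp only [Matrix.mul_add, Matrix.add_mul, Matrix.mul_sub, Matrix.sub_mul,
          Matrix.neg_mul, Matrix.mul_neg, Matrix.mul_assoc, hg1, hg2, hg1t, hg2t,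
          hd', ha', hdt, hat, he, he2', he3, he4, Matrix.mul_one, Matrix.one_mul]
        abel
  rw [hMinv, fromBlocks_multiply, fromBlocks_multiply]
  refine Matrix.fromBlocks_inj.mpr ⟨?_, ?_, ?_, ?_⟩ <;>
    · simp only [Matrix.mul_add, Matrix.add_mul, Matrix.mul_sub, Matrix.sub_mul,
        Matrix.neg_mul, Matrix.mul_neg, Matrix.mul_assoc, hg1, hg2, hg1t, hg2t,
        hd', ha', hdt, hat, he, he2', he3, he4, Matrix.mul_one, Matrix.one_mul,
        Matrix.zero_mul, Matrix.mul_zero, add_zero, zero_add]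
      abel

theorem auxF {r : ℕ} (a d : Matrix (Fin r) (Fin r) ℂ) (h : IsUnit (1 - a * d)) :
    (1 - d * a)⁻¹ = 1 + d * (1 - a * d)⁻¹ * a := by
  have hdet := (Matrix.isUnit_iff_isUnit_det _).mp h
  have hE1 : (1 - a * d) * (1 - a * d)⁻¹ = 1 := Matrix.mul_nonsing_inv _ hdet
  apply Matrix.inv_eq_right_inv
  have key : a * d * (1 - a * d)⁻¹ = (1 - a * d)⁻¹ - 1 := by
    rw [sub_mul, one_mul] at hE1
    rw [eq_sub_iff_add_eq, add_comm]
    exact (sub_eq_iff_eq_add.mp hE1).symm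
  calc (1 - d * a) * (1 + d * (1 - a * d)⁻¹ * a)
      = 1 + d * (1 - a * d)⁻¹ * a - d * a - d * (a * d * (1 - a * d)⁻¹) * a := by noncomm_ring
    _ = 1 := by rw [key]; noncomm_ring

/-- Block-resolvent formula for the `⊲` operation. -/
theorem tri_resolvent_formula {n₁ n₂ q r s : ℕ}
    (Γ₁ : Matrix (Fin n₁) (Fin n₁) ℂ) (Γ₂ : Matrix (Fin n₂) (Fin n₂) ℂ)
    (hΓ₁ : IsUnit Γ₁) (hΓ₂ : IsUnit Γ₂)
    (Υ : Matrix (Fin n₁) (Fin q) ℂ) (Φ : Matrix (Fin n₁) (Fin r) ℂ)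
    (Υt : Matrix (Fin n₂) (Fin r) ℂ) (Φt : Matrix (Fin n₂) (Fin s) ℂ)
    (Q : Matrix (Fin q ⊕ Fin r) (Fin q ⊕ Fin r) ℂ)
    (hQ : Q = fromBlocks (Υᴴ * Γ₁ * Υ) (Υᴴ * Γ₁ * Φ) (Φᴴ * Γ₁ * Υ) (Φᴴ * Γ₁ * Φ))
    (R : Matrix (Fin r ⊕ Fin s) (Fin r ⊕ Fin s) ℂ)
    (hR : R = fromBlocks (Υtᴴ * Γ₂ * Υt) (Υtᴴ * Γ₂ * Φt) (Φtᴴ * Γ₂ * Υt) (Φtᴴ * Γ₂ * Φt))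
    (hsuit : Suitable Q R)
    (M : Matrix (Fin n₁ ⊕ Fin n₂) (Fin n₁ ⊕ Fin n₂) ℂ)
    (hM : M = fromBlocks Γ₁⁻¹ (-(Φ * Υtᴴ)) (-(Υt * Φᴴ)) Γ₂⁻¹)
    (hMunit : IsUnit M) :
    fromBlocks Υᴴ 0 0 Φtᴴ * M⁻¹ * fromBlocks Υ 0 0 Φt = tri Q R := by
  have hsuit' : IsUnit (1 - (Υtᴴ * Γ₂ * Υt) * (Φᴴ * Γ₁ * Φ)) := by
    simpa [Suitable, hQ, hR, Matrix.toBlocks_fromBlocks₁₁, Matrix.toBlocks_fromBlocks₂₂]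
      using hsuit
  have hdet := (Matrix.isUnit_iff_isUnit_det _).mp hsuit'
  have hE1 := Matrix.mul_nonsing_inv _ hdet
  have hE2 := Matrix.nonsing_inv_mul _ hdet
  rw [tri]
  simp only [hQ, hR, Matrix.toBlocks_fromBlocks₁₁, Matrix.toBlocks_fromBlocks₁₂,
    Matrix.toBlocks_fromBlocks₂₁, Matrix.toBlocks_fromBlocks₂₂]
  rw [auxF _ _ hsuit']
  exact aux Γ₁ Γ₂ hΓ₁ hΓ₂ Υ Φ Υt Φt _ _ _ rfl rfl hE1 hE2 M hM

end
end

section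
/- Transfer matrices map Dirichlet boundary data of Q to Dirichlet boundary data of Q ⊲ R: Let q ≤ r ≤ s, Q ∈ 𝓜_⊲(q,r), R ∈ 𝓜_⊲(r,s), and assume (Q,R) is ⊲_r-suitable. Then Q ⊲_r R ∈ 𝓜_⊲(q,s) and 𝐃_{Q⊲R} = 𝐓_R · 𝐃_Q = 𝕋_R · 𝐃_Q, where for sets of matrices, 𝕋·𝐃 := {T·D : T ∈ 𝕋, D ∈ 𝐃}. -/
open Matrix

noncomputable section

/-- `Q ∈ 𝓜_⊲(q,r)`: the upper-right block `β` is surjective as a linear map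
(full rank `q`). -/
def MSub {q r : ℕ} (Q : Matrix (Fin q ⊕ Fin r) (Fin q ⊕ Fin r) ℂ) : Prop :=
  Function.Surjective Q.toBlocks₁₂.mulVecLin

/-- `𝔹_Q`: the set of right inverses of the upper-right block `β` of `Q`. -/
def BSet {q r : ℕ} (Q : Matrix (Fin q ⊕ Fin r) (Fin q ⊕ Fin r) ℂ) :
    Set (Matrix (Fin r) (Fin q) ℂ) :=
  {B | Q.toBlocks₁₂ * B = 1}

/-- `𝔉_Q`: the set of `𝔟` with `β 𝔟 = α`. -/
def FSet {q r : ℕ} (Q : Matrix (Fin q ⊕ Fin r) (Fin q ⊕ Fin r) ℂ) :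
    Set (Matrix (Fin r) (Fin q) ℂ) :=
  {b | Q.toBlocks₁₂ * b = Q.toBlocks₁₁}

/-- The set `𝕋_Q` of transfer matrices associated with `Q`. -/
def TTSet {q r : ℕ} (Q : Matrix (Fin q ⊕ Fin r) (Fin q ⊕ Fin r) ℂ) :
    Set (Matrix (Fin r ⊕ Fin r) (Fin q ⊕ Fin q) ℂ) :=
  {T | ∃ B ∈ BSet Q, ∃ b ∈ FSet Q,
    T = fromBlocks B (-b) (Q.toBlocks₂₂ * B) (Q.toBlocks₂₁ - Q.toBlocks₂₂ * b)}

/-- The subset `𝐓_Q ⊆ 𝕋_Q` of transfer matrices with `𝔟 = Bα`. -/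
def TSet {q r : ℕ} (Q : Matrix (Fin q ⊕ Fin r) (Fin q ⊕ Fin r) ℂ) :
    Set (Matrix (Fin r ⊕ Fin r) (Fin q ⊕ Fin q) ℂ) :=
  {T | ∃ B ∈ BSet Q,
    T = fromBlocks B (-(B * Q.toBlocks₁₁)) (Q.toBlocks₂₂ * B)
          (Q.toBlocks₂₁ - Q.toBlocks₂₂ * (B * Q.toBlocks₁₁))}

/-- The set `𝐃_Q` of Dirichlet boundary data of `Q`. -/
def DSet {q r : ℕ} (Q : Matrix (Fin q ⊕ Fin r) (Fin q ⊕ Fin r) ℂ) :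
    Set (Matrix (Fin r ⊕ Fin r) (Fin q) ℂ) :=
  {D | ∃ B ∈ BSet Q, D = fromRows B (Q.toBlocks₂₂ * B)}

/-- The set `𝐍_Q` of von Neumann boundary data of `Q`. -/
def NSet {q r : ℕ} (Q : Matrix (Fin q ⊕ Fin r) (Fin q ⊕ Fin r) ℂ) :
    Set (Matrix (Fin r ⊕ Fin r) (Fin q) ℂ) :=
  {N | ∃ b ∈ FSet Q, N = fromRows (-b) (Q.toBlocks₂₁ - Q.toBlocks₂₂ * b)}

private lemma isUnit_one_sub_swap' {A : Type*} [Ring A] {a b : A}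
    (h : IsUnit (1 - a * b)) : IsUnit (1 - b * a) := by
  obtain ⟨u, hu⟩ := h
  have h1 : (1 - a * b) * ↑u⁻¹ = 1 := by rw [← hu]; exact u.mul_inv
  have h2 : (↑u⁻¹ : A) * (1 - a * b) = 1 := by rw [← hu]; exact u.inv_mul
  refine isUnit_iff_exists.mpr ⟨1 + b * ↑u⁻¹ * a, ?_, ?_⟩
  · have e : (1 - b * a) * (1 + b * ↑u⁻¹ * a)
        = 1 - b * a + b * ((1 - a * b) * ↑u⁻¹) * a := by noncomm_ring
    rw [e, h1]; noncomm_ring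
  · have e : (1 + b * ↑u⁻¹ * a) * (1 - b * a)
        = 1 - b * a + b * (↑u⁻¹ * (1 - a * b)) * a := by noncomm_ring
    rw [e, h2]; noncomm_ring

private lemma key_prod {q r s : ℕ}
    (β : Matrix (Fin q) (Fin r) ℂ) (δ : Matrix (Fin r) (Fin r) ℂ)
    (A : Matrix (Fin r) (Fin r) ℂ) (Bt : Matrix (Fin r) (Fin s) ℂ)
    (C : Matrix (Fin s) (Fin r) ℂ) (Dl : Matrix (Fin s) (Fin s) ℂ)
    (B b : Matrix (Fin s) (Fin r) ℂ) (B' : Matrix (Fin r) (Fin q) ℂ)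
    (hB : Bt * B = 1) (hb : Bt * b = A) (hB' : β * B' = 1)
    (hE2 : (1 - A * δ)⁻¹ * (1 - A * δ) = 1)
    (hF2 : (1 - δ * A)⁻¹ * (1 - δ * A) = 1) :
    fromBlocks B (-b) (Dl * B) (C - Dl * b) * fromRows B' (δ * B') =
      fromRows (B * B' - b * (δ * B'))
        ((Dl + C * (1 - δ * A)⁻¹ * δ * Bt) * (B * B' - b * (δ * B'))) ∧
    β * (1 - A * δ)⁻¹ * Bt * (B * B' - b * (δ * B')) = 1 := by
  have hX : Bt * (B * B' - b * (δ * B')) = (1 - A * δ) * B' := by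
    rw [Matrix.mul_sub, ← Matrix.mul_assoc, ← Matrix.mul_assoc, hB, hb, Matrix.one_mul,
      Matrix.sub_mul, Matrix.one_mul, Matrix.mul_assoc]
  have h2 : β * (1 - A * δ)⁻¹ * Bt * (B * B' - b * (δ * B')) = 1 := by
    rw [Matrix.mul_assoc, hX, Matrix.mul_assoc, ← Matrix.mul_assoc ((1 - A * δ)⁻¹), hE2,
      Matrix.one_mul, hB']
  refine ⟨?_, h2⟩
  rw [fromBlocks_mul_fromRows]
  have hδE : δ * (1 - A * δ) = (1 - δ * A) * δ := by
    rw [Matrix.mul_sub, Matrix.sub_mul, Matrix.mul_one, Matrix.one_mul, Matrix.mul_assoc]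
  have hbot : C * (1 - δ * A)⁻¹ * δ * Bt * (B * B' - b * (δ * B')) = C * (δ * B') := by
    rw [Matrix.mul_assoc, hX, Matrix.mul_assoc, ← Matrix.mul_assoc δ, hδE,
      Matrix.mul_assoc (1 - δ * A), Matrix.mul_assoc, ← Matrix.mul_assoc ((1 - δ * A)⁻¹),
      hF2, Matrix.one_mul]
  rw [Matrix.neg_mul, ← sub_eq_add_neg]
  refine congrArg _ ?_
  rw [Matrix.add_mul, hbot, Matrix.mul_sub Dl, Matrix.sub_mul, Matrix.mul_assoc Dl B,
    Matrix.mul_assoc Dl b]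
  abel

/-- Transfer matrices map Dirichlet boundary data of `Q` to Dirichlet boundary
data of `Q ⊲ R`: `𝐃_{Q⊲R} = 𝐓_R · 𝐃_Q = 𝕋_R · 𝐃_Q`. -/
theorem dirichlet_data_map {q r s : ℕ} (hqr : q ≤ r) (hrs : r ≤ s)
    (Q : Matrix (Fin q ⊕ Fin r) (Fin q ⊕ Fin r) ℂ)
    (R : Matrix (Fin r ⊕ Fin s) (Fin r ⊕ Fin s) ℂ)
    (hQ : MSub Q) (hR : MSub R) (hsuit : Suitable Q R) :
    MSub (tri Q R) ∧
    DSet (tri Q R) = Set.image2 (fun T D => T * D) (TSet R) (DSet Q) ∧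
    DSet (tri Q R) = Set.image2 (fun T D => T * D) (TTSet R) (DSet Q) := by
  classical
  have hF : IsUnit (1 - Q.toBlocks₂₂ * R.toBlocks₁₁) := isUnit_one_sub_swap' hsuit
  have hE1 : (1 - R.toBlocks₁₁ * Q.toBlocks₂₂) * (1 - R.toBlocks₁₁ * Q.toBlocks₂₂)⁻¹ = 1 :=
    Matrix.mul_nonsing_inv _ ((Matrix.isUnit_iff_isUnit_det _).mp hsuit)
  have hE2 : (1 - R.toBlocks₁₁ * Q.toBlocks₂₂)⁻¹ * (1 - R.toBlocks₁₁ * Q.toBlocks₂₂) = 1 :=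
    Matrix.nonsing_inv_mul _ ((Matrix.isUnit_iff_isUnit_det _).mp hsuit)
  have hF2 : (1 - Q.toBlocks₂₂ * R.toBlocks₁₁)⁻¹ * (1 - Q.toBlocks₂₂ * R.toBlocks₁₁) = 1 :=
    Matrix.nonsing_inv_mul _ ((Matrix.isUnit_iff_isUnit_det _).mp hF)
  have h12 : (tri Q R).toBlocks₁₂
      = Q.toBlocks₁₂ * (1 - R.toBlocks₁₁ * Q.toBlocks₂₂)⁻¹ * R.toBlocks₁₂ :=
    Matrix.toBlocks_fromBlocks₁₂ _ _ _ _
  have h22 : (tri Q R).toBlocks₂₂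
      = R.toBlocks₂₂ +
        R.toBlocks₂₁ * (1 - Q.toBlocks₂₂ * R.toBlocks₁₁)⁻¹ * Q.toBlocks₂₂ * R.toBlocks₁₂ :=
    Matrix.toBlocks_fromBlocks₂₂ _ _ _ _
  have hmv : ∀ {m n : ℕ} (M : Matrix (Fin m) (Fin n) ℂ),
      Function.Surjective M.mulVecLin ↔ ∃ N : Matrix (Fin n) (Fin m) ℂ, M * N = 1 := by
    intro m n M
    have hc : ⇑M.mulVecLin = M.mulVec := rfl
    rw [hc]
    exact Matrix.mulVec_surjective_iff_exists_right_inverse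
  obtain ⟨BQ, hBQ⟩ := (hmv _).mp hQ
  obtain ⟨BR, hBR⟩ := (hmv _).mp hR
  -- part 1 : MSub (tri Q R)
  have hMSub : MSub (tri Q R) := by
    refine (hmv _).mpr ⟨BR * ((1 - R.toBlocks₁₁ * Q.toBlocks₂₂) * BQ), ?_⟩
    rw [h12, Matrix.mul_assoc (Q.toBlocks₁₂ * (1 - R.toBlocks₁₁ * Q.toBlocks₂₂)⁻¹),
      ← Matrix.mul_assoc R.toBlocks₁₂, hBR, Matrix.one_mul, Matrix.mul_assoc Q.toBlocks₁₂,
      ← Matrix.mul_assoc ((1 - R.toBlocks₁₁ * Q.toBlocks₂₂)⁻¹), hE2, Matrix.one_mul, hBQ]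
  -- inclusion : TTSet · DSet ⊆ DSet (tri Q R)
  have hS1 : Set.image2 (fun T D => T * D) (TTSet R) (DSet Q) ⊆ DSet (tri Q R) := by
    rintro _ ⟨T, hT, D, hD, rfl⟩
    obtain ⟨B, hB, b, hb, rfl⟩ := hT
    obtain ⟨B', hB', rfl⟩ := hD
    beta_reduce
    have k := key_prod Q.toBlocks₁₂ Q.toBlocks₂₂ R.toBlocks₁₁ R.toBlocks₁₂ R.toBlocks₂₁
      R.toBlocks₂₂ B b B' hB hb hB' hE2 hF2
    refine ⟨B * B' - b * (Q.toBlocks₂₂ * B'), ?_, ?_⟩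
    · show (tri Q R).toBlocks₁₂ * (B * B' - b * (Q.toBlocks₂₂ * B')) = 1
      rw [h12]; exact k.2
    · rw [h22]; exact k.1
  -- inclusion : TSet ⊆ TTSet
  have hS3 : TSet R ⊆ TTSet R := by
    rintro T ⟨B, hB, rfl⟩
    refine ⟨B, hB, B * R.toBlocks₁₁, ?_, rfl⟩
    show R.toBlocks₁₂ * (B * R.toBlocks₁₁) = R.toBlocks₁₁
    rw [← Matrix.mul_assoc, hB, Matrix.one_mul]
  -- inclusion : DSet (tri Q R) ⊆ TSet · DSet
  have hS2 : DSet (tri Q R) ⊆ Set.image2 (fun T D => T * D) (TSet R) (DSet Q) := by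
    rintro _ ⟨Bh, hBh, rfl⟩
    replace hBh : (tri Q R).toBlocks₁₂ * Bh = 1 := hBh
    rw [h12] at hBh
    set M : Matrix (Fin r) (Fin q) ℂ := R.toBlocks₁₂ * Bh with hM
    set B' : Matrix (Fin r) (Fin q) ℂ := (1 - R.toBlocks₁₁ * Q.toBlocks₂₂)⁻¹ * M with hB'def
    set B : Matrix (Fin s) (Fin r) ℂ :=
      BR + (Bh - BR * M) * (Q.toBlocks₁₂ * (1 - R.toBlocks₁₁ * Q.toBlocks₂₂)⁻¹) with hBdef
    have hβM : Q.toBlocks₁₂ * (1 - R.toBlocks₁₁ * Q.toBlocks₂₂)⁻¹ * M = 1 := by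
      rw [hM, ← Matrix.mul_assoc]; exact hBh
    have hB'mem : Q.toBlocks₁₂ * B' = 1 := by
      rw [hB'def, ← Matrix.mul_assoc]; exact hβM
    have hBmem : R.toBlocks₁₂ * B = 1 := by
      have h0 : R.toBlocks₁₂ * (Bh - BR * M) = 0 := by
        rw [Matrix.mul_sub, ← hM, ← Matrix.mul_assoc, hBR, Matrix.one_mul, sub_self]
      rw [hBdef, Matrix.mul_add, hBR, ← Matrix.mul_assoc, h0, Matrix.zero_mul, add_zero]
    have hEB' : (1 - R.toBlocks₁₁ * Q.toBlocks₂₂) * B' = M := by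
      rw [hB'def, ← Matrix.mul_assoc, hE1, Matrix.one_mul]
    have hXeq : B * B' - B * R.toBlocks₁₁ * (Q.toBlocks₂₂ * B') = Bh := by
      have h1 : B * B' - B * R.toBlocks₁₁ * (Q.toBlocks₂₂ * B')
          = B * ((1 - R.toBlocks₁₁ * Q.toBlocks₂₂) * B') := by
        rw [Matrix.sub_mul, Matrix.one_mul, Matrix.mul_assoc R.toBlocks₁₁, Matrix.mul_sub B,
          ← Matrix.mul_assoc B R.toBlocks₁₁]
      rw [h1, hEB', hBdef, Matrix.add_mul, Matrix.mul_assoc, hβM, Matrix.mul_one]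
      abel
    have hbFA : R.toBlocks₁₂ * (B * R.toBlocks₁₁) = R.toBlocks₁₁ := by
      rw [← Matrix.mul_assoc, hBmem, Matrix.one_mul]
    have k := key_prod Q.toBlocks₁₂ Q.toBlocks₂₂ R.toBlocks₁₁ R.toBlocks₁₂ R.toBlocks₂₁
      R.toBlocks₂₂ B (B * R.toBlocks₁₁) B' hBmem hbFA hB'mem hE2 hF2
    refine Set.mem_image2.mpr ⟨_, ⟨B, hBmem, rfl⟩, _, ⟨B', hB'mem, rfl⟩, ?_⟩
    beta_reduce
    rw [k.1, hXeq, h22]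
  refine ⟨hMSub, ?_, ?_⟩
  · exact Set.Subset.antisymm hS2
      ((Set.image2_subset hS3 Set.Subset.rfl).trans hS1)
  · exact Set.Subset.antisymm
      (hS2.trans (Set.image2_subset hS3 Set.Subset.rfl)) hS1

end
end

section
/- Hermitian-symplectic structure of transfer matrices: Let q ≤ r and Q ∈ 𝓜_⊲(q,r) be Hermitian, Q = Q^*. Then for any T₁, T₂ ∈ 𝕋_Q one has T₁^* J_r T₂ = J_q. In particular every T ∈ 𝕋_Q satisfies T^* J_r T = J_q. -/
open Matrix

noncomputable section

/-- The standard symplectic matrix `J_m = [[0, −1],[1, 0]]`. -/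
def Jm (m : ℕ) : Matrix (Fin m ⊕ Fin m) (Fin m ⊕ Fin m) ℂ :=
  fromBlocks 0 (-1) 1 0

/-- Hermitian-symplectic structure of transfer matrices: if `Q = Q^*` then
`T₁^* J_r T₂ = J_q` for all `T₁, T₂ ∈ 𝕋_Q`. -/
theorem transfer_hermitian_symplectic {q r : ℕ} (hqr : q ≤ r)
    (Q : Matrix (Fin q ⊕ Fin r) (Fin q ⊕ Fin r) ℂ)
    (hQ : MSub Q) (hherm : Qᴴ = Q)
    (T₁ T₂ : Matrix (Fin r ⊕ Fin r) (Fin q ⊕ Fin q) ℂ)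
    (h₁ : T₁ ∈ TTSet Q) (h₂ : T₂ ∈ TTSet Q) :
    T₁ᴴ * Jm r * T₂ = Jm q := by
  obtain ⟨B₁, hB₁, b₁, hb₁, rfl⟩ := h₁
  obtain ⟨B₂, hB₂, b₂, hb₂, rfl⟩ := h₂
  set α := Q.toBlocks₁₁
  set β := Q.toBlocks₁₂
  set γ := Q.toBlocks₂₁
  set δ := Q.toBlocks₂₂
  have hα : αᴴ = α := by
    ext i j
    have := congrFun (congrFun hherm (Sum.inl i)) (Sum.inl j)
    simpa [Matrix.conjTranspose_apply, α, Matrix.toBlocks₁₁] using this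
  have hγ : γ = βᴴ := by
    ext i j
    have := congrFun (congrFun hherm (Sum.inr i)) (Sum.inl j)
    simpa [Matrix.conjTranspose_apply, γ, β, Matrix.toBlocks₂₁, Matrix.toBlocks₁₂,
      eq_comm] using this.symm
  have hδ : δᴴ = δ := by
    ext i j
    have := congrFun (congrFun hherm (Sum.inr i)) (Sum.inr j)
    simpa [Matrix.conjTranspose_apply, δ, Matrix.toBlocks₂₂] using this
  have hB₁' : β * B₁ = 1 := hB₁
  have hB₂' : β * B₂ = 1 := hB₂
  have hb₁' : β * b₁ = α := hb₁
  have hb₂' : β * b₂ = α := hb₂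
  have h1 : B₁ᴴ * γ = 1 := by
    rw [hγ, ← Matrix.conjTranspose_mul, hB₁', Matrix.conjTranspose_one]
  have h2 : γᴴ * B₂ = 1 := by
    rw [hγ, Matrix.conjTranspose_conjTranspose, hB₂']
  have h3 : b₁ᴴ * γ = α := by
    rw [hγ, ← Matrix.conjTranspose_mul, hb₁', hα]
  have h4 : γᴴ * b₂ = α := by
    rw [hγ, Matrix.conjTranspose_conjTranspose, hb₂']
  rw [Jm, Jm, fromBlocks_conjTranspose, fromBlocks_multiply, fromBlocks_multiply]
  rw [Matrix.fromBlocks_inj]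
  refine ⟨?_, ?_, ?_, ?_⟩ <;>
    simp only [zero_add, add_zero, Matrix.mul_zero, Matrix.zero_mul, Matrix.mul_one,
      Matrix.one_mul, Matrix.mul_neg, Matrix.neg_mul, neg_neg,
      Matrix.conjTranspose_mul, Matrix.conjTranspose_neg, Matrix.conjTranspose_sub, hδ,
      Matrix.sub_mul, Matrix.mul_sub, Matrix.mul_assoc, h1, h2, h3, h4] <;>
    abel

end
end

section
/- Symplectic structure of transfer matrices in the symmetric case: Let q ≤ r and Q ∈ 𝓜_⊲(q,r) be symmetric in the matrix sense, Q = Q^⊤. Then for any T₁, T₂ ∈ 𝕋_Q one has T₁^⊤ J_r T₂ = J_q. In particular every T ∈ 𝕋_Q satisfies T^⊤ J_r T = J_q. -/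
open Matrix

noncomputable section

/-- Symplectic structure of transfer matrices in the symmetric case: if
`Q = Q^⊤` then `T₁^⊤ J_r T₂ = J_q` for all `T₁, T₂ ∈ 𝕋_Q`. -/
theorem transfer_symplectic {q r : ℕ} (hqr : q ≤ r)
    (Q : Matrix (Fin q ⊕ Fin r) (Fin q ⊕ Fin r) ℂ)
    (hQ : MSub Q) (hsymm : Qᵀ = Q)
    (T₁ T₂ : Matrix (Fin r ⊕ Fin r) (Fin q ⊕ Fin q) ℂ)
    (h₁ : T₁ ∈ TTSet Q) (h₂ : T₂ ∈ TTSet Q) :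
    T₁ᵀ * Jm r * T₂ = Jm q := by
  obtain ⟨B₁, hB₁, b₁, hb₁, rfl⟩ := h₁
  obtain ⟨B₂, hB₂, b₂, hb₂, rfl⟩ := h₂
  have hδ : Q.toBlocks₂₂ᵀ = Q.toBlocks₂₂ := by
    ext i j; exact congrFun (congrFun hsymm (Sum.inr i)) (Sum.inr j)
  have hγ : Q.toBlocks₂₁ᵀ = Q.toBlocks₁₂ := by
    ext i j
    simpa [Matrix.toBlocks₂₁, Matrix.toBlocks₁₂] using
      congrFun (congrFun hsymm (Sum.inl i)) (Sum.inr j)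
  have hα : Q.toBlocks₁₁ᵀ = Q.toBlocks₁₁ := by
    ext i j; exact congrFun (congrFun hsymm (Sum.inl i)) (Sum.inl j)
  have hB₁e : Q.toBlocks₁₂ * B₁ = 1 := hB₁
  have hB₂e : Q.toBlocks₁₂ * B₂ = 1 := hB₂
  have hb₁e : Q.toBlocks₁₂ * b₁ = Q.toBlocks₁₁ := hb₁
  have hb₂e : Q.toBlocks₁₂ * b₂ = Q.toBlocks₁₁ := hb₂
  have hB₁' : B₁ᵀ * Q.toBlocks₂₁ = 1 := by
    have := congrArg Matrix.transpose hB₁e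
    rwa [transpose_mul, transpose_one, ← hγ, transpose_transpose] at this
  have hb₁' : b₁ᵀ * Q.toBlocks₂₁ = Q.toBlocks₁₁ := by
    have := congrArg Matrix.transpose hb₁e
    rwa [transpose_mul, hα, ← hγ, transpose_transpose] at this
  rw [Jm, Jm, fromBlocks_transpose, fromBlocks_multiply, fromBlocks_multiply]
  simp only [Matrix.mul_zero, Matrix.zero_mul, Matrix.mul_one, Matrix.one_mul,
    Matrix.mul_neg, Matrix.neg_mul, zero_add, add_zero,
    transpose_mul, transpose_neg, transpose_sub, hδ, hγ, hα,
    Matrix.mul_sub, Matrix.sub_mul, Matrix.mul_assoc, hB₁', hB₂e, hb₁', hb₂e,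
    neg_neg, neg_sub, smul_mul_assoc, neg_one_smul, neg_smul, one_smul,
    sub_add_cancel_right, sub_add_cancel]
  have e1 : B₁ᵀ * (Q.toBlocks₂₂ * B₂) + -(B₁ᵀ * (Q.toBlocks₂₂ * B₂)) =
      (0 : Matrix (Fin q) (Fin q) ℂ) := by abel
  have e2 : -(B₁ᵀ * (Q.toBlocks₂₂ * b₂)) + (-1 - -(B₁ᵀ * (Q.toBlocks₂₂ * b₂))) =
      (-1 : Matrix (Fin q) (Fin q) ℂ) := by abel
  have e4 : b₁ᵀ * (Q.toBlocks₂₂ * b₂) - Q.toBlocks₁₁ +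
      (Q.toBlocks₁₁ - b₁ᵀ * (Q.toBlocks₂₂ * b₂)) = (0 : Matrix (Fin q) (Fin q) ℂ) := by abel
  rw [e1, e2, e4]

end
end

section
/- Right inverses of a product of full-rank rectangular matrices: Let 𝕂 be ℝ or ℂ, let l ≤ m ≤ n, let A ∈ 𝕂^{l×m} have full rank l and B ∈ 𝕂^{m×n} have full rank m. Then C = AB ∈ 𝕂^{l×n} has full rank l, and the set of right inverses of C coincides with the set of products of right inverses: {Ĉ ∈ 𝕂^{n×l} : ABĈ = 1_l} = {B̂Â : Â ∈ 𝕂^{m×l}, B̂ ∈ 𝕂^{n×m}, AÂ = 1_l and BB̂ = 1_m}. -/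
open Matrix

noncomputable section

lemma exists_right_inv_of_surj {𝕂 : Type*} [Field 𝕂] {m n : ℕ}
    (B : Matrix (Fin m) (Fin n) 𝕂) (hB : Function.Surjective B.mulVecLin) :
    ∃ Bh : Matrix (Fin n) (Fin m) 𝕂, B * Bh = 1 := by
  obtain ⟨g, hg⟩ := B.mulVecLin.exists_rightInverse_of_surjective
    (LinearMap.range_eq_top.mpr hB)
  refine ⟨LinearMap.toMatrix' g, ?_⟩
  have hBm : B = LinearMap.toMatrix' B.mulVecLin := by
    rw [← Matrix.toLin'_apply', LinearMap.toMatrix'_toLin']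
  calc B * LinearMap.toMatrix' g
      = LinearMap.toMatrix' B.mulVecLin * LinearMap.toMatrix' g := by rw [← hBm]
    _ = LinearMap.toMatrix' (B.mulVecLin ∘ₗ g) := (LinearMap.toMatrix'_comp _ _).symm
    _ = LinearMap.toMatrix' (LinearMap.id) := by rw [hg]
    _ = 1 := LinearMap.toMatrix'_id

/-- Right inverses of a product of full-rank rectangular matrices: if
`A ∈ 𝕂^{l×m}` and `B ∈ 𝕂^{m×n}` are surjective (full rank `l`, resp. `m`),
then `C = AB` has full rank `l` and the right inverses of `C` are exactly the
products `B̂ Â` of right inverses of `B` and `A`. -/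
theorem right_inverses_of_product {𝕂 : Type*} [RCLike 𝕂] {l m n : ℕ}
    (hlm : l ≤ m) (hmn : m ≤ n)
    (A : Matrix (Fin l) (Fin m) 𝕂) (B : Matrix (Fin m) (Fin n) 𝕂)
    (hA : Function.Surjective A.mulVecLin)
    (hB : Function.Surjective B.mulVecLin) :
    Function.Surjective (A * B).mulVecLin ∧
    {C : Matrix (Fin n) (Fin l) 𝕂 | A * B * C = 1} =
      {C : Matrix (Fin n) (Fin l) 𝕂 |
        ∃ Ah : Matrix (Fin m) (Fin l) 𝕂, ∃ Bh : Matrix (Fin n) (Fin m) 𝕂,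
          A * Ah = 1 ∧ B * Bh = 1 ∧ C = Bh * Ah} := by
  constructor
  · rw [Matrix.mulVecLin_mul]
    exact hA.comp hB
  · ext C
    simp only [Set.mem_setOf_eq]
    constructor
    · intro hC
      obtain ⟨Bh0, hBh0⟩ := exists_right_inv_of_surj B hB
      refine ⟨B * C, C * A + Bh0 * (1 - B * C * A), ?_, ?_, ?_⟩
      · rw [← Matrix.mul_assoc, hC]
      · rw [Matrix.mul_add, ← Matrix.mul_assoc, ← Matrix.mul_assoc, hBh0, Matrix.one_mul]
        abel
      · have h1 : A * (B * C) = 1 := by rw [← Matrix.mul_assoc]; exact hC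
        calc C = (C * A + Bh0 * (1 - B * C * A)) * (B * C) := by
                  simp only [Matrix.add_mul, Matrix.sub_mul, Matrix.mul_sub, Matrix.one_mul,
                    Matrix.mul_assoc, h1, Matrix.mul_one]
                  abel
          _ = _ := rfl
    · rintro ⟨Ah, Bh, hAh, hBh, rfl⟩
      rw [Matrix.mul_assoc A B (Bh * Ah), ← Matrix.mul_assoc B Bh Ah, hBh, Matrix.one_mul, hAh]

end
end

section
/- Splitting of boundary resolvent data under the ⊲ operation: Let H₁ ∈ ℂ^{n₁×n₁} and H₂ ∈ ℂ^{n₂×n₂} be Hermitian, let Υ ∈ ℂ^{n₁×q}, Φ ∈ ℂ^{n₁×r}, Υ̃ ∈ ℂ^{n₂×r}, Φ̃ ∈ ℂ^{n₂×s}, where Φ and Υ̃ have full column rank r, and let H = [[H₁, −ΦΥ̃^*],[−Υ̃Φ^*, H₂]] ∈ ℂ^{(n₁+n₂)×(n₁+n₂)} (which is Hermitian). Let z ∈ ℂ with Im(z) > 0, and set Q = [[Υ^*(H₁−z)^{-1}Υ, Υ^*(H₁−z)^{-1}Φ],[Φ^*(H₁−z)^{-1}Υ, Φ^*(H₁−z)^{-1}Φ]]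 with (q,r) splitting and R = [[Υ̃^*(H₂−z)^{-1}Υ̃, Υ̃^*(H₂−z)^{-1}Φ̃],[Φ̃^*(H₂−z)^{-1}Υ̃, Φ̃^*(H₂−z)^{-1}Φ̃]] with (r,s) splitting. Then (Q,R) is ⊲_r-suitable and [[Υ^*, 0],[0, Φ̃^*]] · (H − z)^{-1} · [[Υ, 0],[0, Φ̃]] = Q ⊲_r R. -/
open Matrix

noncomputable section

section Aux

variable {n m : Type*} [Fintype n] [Fintype m]

lemma star_quad (M : Matrix n n ℂ) (v : n → ℂ) :
    (starRingEnd ℂ) (star v ⬝ᵥ M *ᵥ v) = star v ⬝ᵥ Mᴴ *ᵥ v := by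
  rw [show ((starRingEnd ℂ) (star v ⬝ᵥ M *ᵥ v) = star (star v ⬝ᵥ M *ᵥ v)) from rfl,
    ← star_dotProduct_star, star_star, star_mulVec, dotProduct_mulVec]

lemma herm_quad_im {M : Matrix n n ℂ} (hM : M.IsHermitian) (v : n → ℂ) :
    (star v ⬝ᵥ M *ᵥ v).im = 0 := by
  have := star_quad M v
  rw [hM.eq] at this
  have h2 := congrArg Complex.im this
  simp only [Complex.conj_im] at h2
  linarith

lemma adj_move (A : Matrix m n ℂ) (u : n → ℂ) (x : m → ℂ) :
    star u ⬝ᵥ Aᴴ *ᵥ x = star (A *ᵥ u) ⬝ᵥ x := by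
  rw [dotProduct_mulVec, ← star_mulVec]

lemma star_dot_self_eq (v : n → ℂ) :
    star v ⬝ᵥ v = ((∑ i, Complex.normSq (v i) : ℝ) : ℂ) := by
  simp only [dotProduct, Pi.star_apply, Complex.star_def, Complex.ofReal_sum]
  refine Finset.sum_congr rfl fun i _ => ?_
  rw [mul_comm, Complex.mul_conj]

lemma dot_star_self_im (v : n → ℂ) : (star v ⬝ᵥ v).im = 0 := by
  rw [star_dot_self_eq]; simp

lemma dot_star_self_re_pos {v : n → ℂ} (hv : v ≠ 0) : 0 < (star v ⬝ᵥ v).re := by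
  rw [star_dot_self_eq]
  simp only [Complex.ofReal_re]
  obtain ⟨i, hi⟩ := Function.ne_iff.mp hv
  exact Finset.sum_pos' (fun j _ => Complex.normSq_nonneg _)
    ⟨i, Finset.mem_univ i, Complex.normSq_pos.mpr hi⟩

/-- matrices whose quadratic form has negative imaginary part away from zero -/
def NegIm (M : Matrix n n ℂ) : Prop := ∀ v, v ≠ 0 → (star v ⬝ᵥ M *ᵥ v).im < 0

lemma NegIm.isUnit [DecidableEq n] {M : Matrix n n ℂ} (h : NegIm M) : IsUnit M := by
  rw [Matrix.isUnit_iff_isUnit_det, isUnit_iff_ne_zero]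
  intro hdet
  obtain ⟨v, hv, hMv⟩ := (Matrix.exists_mulVec_eq_zero_iff).mpr hdet
  have := h v hv
  rw [hMv] at this
  simp at this

lemma negIm_sub_smul [DecidableEq n] {H : Matrix n n ℂ} (hH : H.IsHermitian) {z : ℂ}
    (hz : 0 < z.im) : NegIm (H - z • 1) := by
  intro v hv
  have h1 : (H - z • (1 : Matrix n n ℂ)) *ᵥ v = H *ᵥ v - z • v := by
    rw [Matrix.sub_mulVec, Matrix.smul_mulVec, Matrix.one_mulVec]
  rw [h1, dotProduct_sub, dotProduct_smul]
  have h2 := herm_quad_im hH v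
  have h3 := dot_star_self_im v
  have h4 := dot_star_self_re_pos hv
  simp only [Complex.sub_im, smul_eq_mul, Complex.mul_im, h2, h3]
  nlinarith

lemma NegIm.inv_im_nonneg [DecidableEq n] {M : Matrix n n ℂ} (h : NegIm M) (u : n → ℂ) :
    0 ≤ (star u ⬝ᵥ M⁻¹ *ᵥ u).im := by
  have hdet := (Matrix.isUnit_iff_isUnit_det M).mp h.isUnit
  set y := M⁻¹ *ᵥ u with hy
  have hu : u = M *ᵥ y := by
    rw [hy, Matrix.mulVec_mulVec, Matrix.mul_nonsing_inv M hdet, Matrix.one_mulVec]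
  by_cases hy0 : y = 0
  · rw [show (star u ⬝ᵥ y) = 0 from by rw [hy0]; simp]; simp
  · have hc : star u ⬝ᵥ y = (starRingEnd ℂ) (star y ⬝ᵥ M *ᵥ y) := by
      rw [hu, star_dotProduct]; rfl
    rw [hc]
    have := h y hy0
    simp only [Complex.conj_im]
    linarith

end Aux

/-- Splitting of boundary resolvent data under the `⊲` operation. -/
theorem boundary_resolvent_data_split {n₁ n₂ q r s : ℕ}
    (H₁ : Matrix (Fin n₁) (Fin n₁) ℂ) (H₂ : Matrix (Fin n₂) (Fin n₂) ℂ)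
    (hH₁ : H₁.IsHermitian) (hH₂ : H₂.IsHermitian)
    (Υ : Matrix (Fin n₁) (Fin q) ℂ) (Φ : Matrix (Fin n₁) (Fin r) ℂ)
    (Υt : Matrix (Fin n₂) (Fin r) ℂ) (Φt : Matrix (Fin n₂) (Fin s) ℂ)
    (hΦ : Function.Injective Φ.mulVecLin)
    (hΥt : Function.Injective Υt.mulVecLin)
    (H : Matrix (Fin n₁ ⊕ Fin n₂) (Fin n₁ ⊕ Fin n₂) ℂ)
    (hH : H = fromBlocks H₁ (-(Φ * Υtᴴ)) (-(Υt * Φᴴ)) H₂)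
    (z : ℂ) (hz : 0 < z.im)
    (Q : Matrix (Fin q ⊕ Fin r) (Fin q ⊕ Fin r) ℂ)
    (hQ : Q = fromBlocks
      (Υᴴ * (H₁ - z • 1)⁻¹ * Υ) (Υᴴ * (H₁ - z • 1)⁻¹ * Φ)
      (Φᴴ * (H₁ - z • 1)⁻¹ * Υ) (Φᴴ * (H₁ - z • 1)⁻¹ * Φ))
    (R : Matrix (Fin r ⊕ Fin s) (Fin r ⊕ Fin s) ℂ)
    (hR : R = fromBlocks
      (Υtᴴ * (H₂ - z • 1)⁻¹ * Υt) (Υtᴴ * (H₂ - z • 1)⁻¹ * Φt)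
      (Φtᴴ * (H₂ - z • 1)⁻¹ * Υt) (Φtᴴ * (H₂ - z • 1)⁻¹ * Φt)) :
    Suitable Q R ∧
    fromBlocks Υᴴ 0 0 Φtᴴ * (H - z • 1)⁻¹ * fromBlocks Υ 0 0 Φt = tri Q R := by
  subst hH hQ hR
  set A := H₁ - z • (1 : Matrix (Fin n₁) (Fin n₁) ℂ) with hA
  set D := H₂ - z • (1 : Matrix (Fin n₂) (Fin n₂) ℂ) with hD
  have hAneg : NegIm A := by rw [hA]; exact negIm_sub_smul hH₁ hz
  have hDneg : NegIm D := by rw [hD]; exact negIm_sub_smul hH₂ hz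
  have hAd : IsUnit A.det := (Matrix.isUnit_iff_isUnit_det A).mp hAneg.isUnit
  have hDd : IsUnit D.det := (Matrix.isUnit_iff_isUnit_det D).mp hDneg.isUnit
  have hddim : ∀ w : Fin r → ℂ, 0 ≤ (star w ⬝ᵥ (Φᴴ * (A⁻¹ * Φ)) *ᵥ w).im := by
    intro w
    have h1 : (Φᴴ * (A⁻¹ * Φ)) *ᵥ w = Φᴴ *ᵥ (A⁻¹ *ᵥ (Φ *ᵥ w)) := by
      simp only [Matrix.mulVec_mulVec, Matrix.mul_assoc]
    rw [h1, adj_move]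
    exact hAneg.inv_im_nonneg _
  set S : Matrix (Fin n₂) (Fin n₂) ℂ := D - Υt * (Φᴴ * (A⁻¹ * (Φ * Υtᴴ))) with hS
  have hSneg : NegIm S := by
    intro x hx
    have h1 : star x ⬝ᵥ S *ᵥ x
        = star x ⬝ᵥ D *ᵥ x - star (Υtᴴ *ᵥ x) ⬝ᵥ (Φᴴ * (A⁻¹ * Φ)) *ᵥ (Υtᴴ *ᵥ x) := by
      rw [hS, Matrix.sub_mulVec, dotProduct_sub]
      congr 1
      have ha : (Υt * (Φᴴ * (A⁻¹ * (Φ * Υtᴴ)))) *ᵥ x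
          = Υt *ᵥ ((Φᴴ * (A⁻¹ * Φ)) *ᵥ (Υtᴴ *ᵥ x)) := by
        simp only [Matrix.mulVec_mulVec, Matrix.mul_assoc]
      rw [ha]
      have hb := adj_move Υtᴴ x ((Φᴴ * (A⁻¹ * Φ)) *ᵥ (Υtᴴ *ᵥ x))
      rw [conjTranspose_conjTranspose] at hb
      rw [hb]
    have h4 := hDneg x hx
    have h5 := hddim (Υtᴴ *ᵥ x)
    rw [h1]
    simp only [Complex.sub_im]
    linarith
  have hSd : IsUnit S.det := (Matrix.isUnit_iff_isUnit_det S).mp hSneg.isUnit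
  -- cancellation helpers
  have cancelA : ∀ (k : ℕ) (B : Matrix (Fin n₁) (Fin k) ℂ), A * (A⁻¹ * B) = B :=
    fun k B => Matrix.mul_nonsing_inv_cancel_left A B hAd
  have cancelS : ∀ (k : ℕ) (B : Matrix (Fin n₂) (Fin k) ℂ), S * (S⁻¹ * B) = B :=
    fun k B => Matrix.mul_nonsing_inv_cancel_left S B hSd
  -- invertibility of 1 - α̃δ and 1 - δα̃ via Sylvester's determinant identity
  have hKeq : D⁻¹ * S = 1 + (D⁻¹ * (Υt * (Φᴴ * (A⁻¹ * Φ)))) * (-Υtᴴ) := by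
    rw [hS, Matrix.mul_sub, Matrix.nonsing_inv_mul D hDd]
    simp only [Matrix.mul_neg, Matrix.mul_assoc, sub_eq_add_neg]
  have hKd : IsUnit (D⁻¹ * S).det := by
    rw [Matrix.det_mul]
    exact (D.isUnit_nonsing_inv_det hDd).mul hSd
  have hTd : IsUnit ((1 - Υtᴴ * (D⁻¹ * (Υt * (Φᴴ * (A⁻¹ * Φ)))))).det := by
    have h1 : ((1 - Υtᴴ * (D⁻¹ * (Υt * (Φᴴ * (A⁻¹ * Φ)))))) = 1 + (-Υtᴴ) * (D⁻¹ * (Υt * (Φᴴ * (A⁻¹ * Φ)))) := by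
      simp only [Matrix.neg_mul, Matrix.mul_assoc, sub_eq_add_neg]
    rw [h1, ← Matrix.det_one_add_mul_comm, ← hKeq]
    exact hKd
  have hTu : IsUnit ((1 - Υtᴴ * (D⁻¹ * (Υt * (Φᴴ * (A⁻¹ * Φ)))))) := (Matrix.isUnit_iff_isUnit_det _).mpr hTd
  have hKeq2 : D⁻¹ * S = 1 + (D⁻¹ * Υt) * (-(Φᴴ * (A⁻¹ * (Φ * Υtᴴ)))) := by
    rw [hS, Matrix.mul_sub, Matrix.nonsing_inv_mul D hDd]
    simp only [Matrix.mul_neg, Matrix.mul_assoc, sub_eq_add_neg]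
  have hTpd : IsUnit ((1 - Φᴴ * (A⁻¹ * (Φ * (Υtᴴ * (D⁻¹ * Υt)))))).det := by
    have h1 : ((1 - Φᴴ * (A⁻¹ * (Φ * (Υtᴴ * (D⁻¹ * Υt)))))) = 1 + (-(Φᴴ * (A⁻¹ * (Φ * Υtᴴ)))) * (D⁻¹ * Υt) := by
      simp only [Matrix.neg_mul, Matrix.mul_assoc, sub_eq_add_neg]
    rw [h1, ← Matrix.det_one_add_mul_comm, ← hKeq2]
    exact hKd
  -- push-through identities
  have hgs : ((1 - Υtᴴ * (D⁻¹ * (Υt * (Φᴴ * (A⁻¹ * Φ)))))) * Υtᴴ = Υtᴴ * (D⁻¹ * S) := by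
    rw [hS]
    simp only [Matrix.mul_sub, Matrix.sub_mul, Matrix.one_mul, Matrix.mul_assoc,
      Matrix.nonsing_inv_mul D hDd, Matrix.mul_one]
  have h2a : ((1 - Υtᴴ * (D⁻¹ * (Υt * (Φᴴ * (A⁻¹ * Φ)))))) * (Υtᴴ * S⁻¹) = Υtᴴ * D⁻¹ := by
    rw [← Matrix.mul_assoc, hgs, Matrix.mul_assoc, Matrix.mul_assoc,
      Matrix.mul_nonsing_inv S hSd, Matrix.mul_one]
  have h2 : ∀ (k : ℕ) (X : Matrix (Fin n₂) (Fin k) ℂ),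
      Υtᴴ * (S⁻¹ * X) = ((1 - Υtᴴ * (D⁻¹ * (Υt * (Φᴴ * (A⁻¹ * Φ))))))⁻¹ * (Υtᴴ * (D⁻¹ * X)) := by
    intro k X
    calc Υtᴴ * (S⁻¹ * X) = (Υtᴴ * S⁻¹) * X := (Matrix.mul_assoc _ _ _).symm
      _ = (((1 - Υtᴴ * (D⁻¹ * (Υt * (Φᴴ * (A⁻¹ * Φ))))))⁻¹ * (((1 - Υtᴴ * (D⁻¹ * (Υt * (Φᴴ * (A⁻¹ * Φ)))))) * (Υtᴴ * S⁻¹))) * X := by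
          rw [← Matrix.mul_assoc ((1 - Υtᴴ * (D⁻¹ * (Υt * (Φᴴ * (A⁻¹ * Φ))))))⁻¹, Matrix.nonsing_inv_mul _ hTd, Matrix.one_mul]
      _ = (((1 - Υtᴴ * (D⁻¹ * (Υt * (Φᴴ * (A⁻¹ * Φ))))))⁻¹ * (Υtᴴ * D⁻¹)) * X := by rw [h2a]
      _ = ((1 - Υtᴴ * (D⁻¹ * (Υt * (Φᴴ * (A⁻¹ * Φ))))))⁻¹ * (Υtᴴ * (D⁻¹ * X)) := by simp only [Matrix.mul_assoc]
  have hsg : S * (D⁻¹ * Υt) = Υt * ((1 - Φᴴ * (A⁻¹ * (Φ * (Υtᴴ * (D⁻¹ * Υt)))))) := by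
    rw [hS]
    simp only [Matrix.sub_mul, Matrix.mul_sub, Matrix.mul_one, Matrix.mul_assoc,
      Matrix.mul_nonsing_inv_cancel_left _ _ hDd]
  have h3a : S * (D⁻¹ * (Υt * ((1 - Φᴴ * (A⁻¹ * (Φ * (Υtᴴ * (D⁻¹ * Υt))))))⁻¹)) = Υt := by
    calc S * (D⁻¹ * (Υt * ((1 - Φᴴ * (A⁻¹ * (Φ * (Υtᴴ * (D⁻¹ * Υt))))))⁻¹)) = (S * (D⁻¹ * Υt)) * ((1 - Φᴴ * (A⁻¹ * (Φ * (Υtᴴ * (D⁻¹ * Υt))))))⁻¹ := by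
          simp only [Matrix.mul_assoc]
      _ = (Υt * ((1 - Φᴴ * (A⁻¹ * (Φ * (Υtᴴ * (D⁻¹ * Υt))))))) * ((1 - Φᴴ * (A⁻¹ * (Φ * (Υtᴴ * (D⁻¹ * Υt))))))⁻¹ := by rw [hsg]
      _ = Υt := by rw [Matrix.mul_assoc, Matrix.mul_nonsing_inv _ hTpd, Matrix.mul_one]
  have h3 : ∀ (k : ℕ) (X : Matrix (Fin r) (Fin k) ℂ),
      S⁻¹ * (Υt * X) = D⁻¹ * (Υt * (((1 - Φᴴ * (A⁻¹ * (Φ * (Υtᴴ * (D⁻¹ * Υt))))))⁻¹ * X)) := by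
    intro k X
    calc S⁻¹ * (Υt * X) = S⁻¹ * ((S * (D⁻¹ * (Υt * ((1 - Φᴴ * (A⁻¹ * (Φ * (Υtᴴ * (D⁻¹ * Υt))))))⁻¹))) * X) := by rw [h3a]
      _ = (S⁻¹ * S) * (D⁻¹ * (Υt * (((1 - Φᴴ * (A⁻¹ * (Φ * (Υtᴴ * (D⁻¹ * Υt))))))⁻¹ * X))) := by simp only [Matrix.mul_assoc]
      _ = D⁻¹ * (Υt * (((1 - Φᴴ * (A⁻¹ * (Φ * (Υtᴴ * (D⁻¹ * Υt))))))⁻¹ * X)) := by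
          rw [Matrix.nonsing_inv_mul _ hSd, Matrix.one_mul]
  have hSD : S * D⁻¹ = 1 - Υt * (Φᴴ * (A⁻¹ * (Φ * (Υtᴴ * D⁻¹)))) := by
    rw [hS, Matrix.sub_mul, Matrix.mul_nonsing_inv D hDd]
    simp only [Matrix.mul_assoc]
  have hSW4 : S * (D⁻¹ + D⁻¹ * (Υt * ((1 - Φᴴ * (A⁻¹ * (Φ * (Υtᴴ * (D⁻¹ * Υt)))))⁻¹ * (Φᴴ * (A⁻¹ * (Φ * (Υtᴴ * D⁻¹))))))) = 1 := by
    rw [Matrix.mul_add, hSD]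
    have hc : S * (D⁻¹ * (Υt * (((1 - Φᴴ * (A⁻¹ * (Φ * (Υtᴴ * (D⁻¹ * Υt))))))⁻¹ * (Φᴴ * (A⁻¹ * (Φ * (Υtᴴ * D⁻¹)))))))
        = Υt * (Φᴴ * (A⁻¹ * (Φ * (Υtᴴ * D⁻¹)))) := by
      calc S * (D⁻¹ * (Υt * (((1 - Φᴴ * (A⁻¹ * (Φ * (Υtᴴ * (D⁻¹ * Υt))))))⁻¹ * (Φᴴ * (A⁻¹ * (Φ * (Υtᴴ * D⁻¹)))))))
          = (S * (D⁻¹ * (Υt * ((1 - Φᴴ * (A⁻¹ * (Φ * (Υtᴴ * (D⁻¹ * Υt))))))⁻¹))) * (Φᴴ * (A⁻¹ * (Φ * (Υtᴴ * D⁻¹)))) := by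
            simp only [Matrix.mul_assoc]
        _ = Υt * (Φᴴ * (A⁻¹ * (Φ * (Υtᴴ * D⁻¹)))) := by rw [h3a]
    rw [hc, sub_add_cancel]
  have h4 : S⁻¹ = D⁻¹ + D⁻¹ * (Υt * ((1 - Φᴴ * (A⁻¹ * (Φ * (Υtᴴ * (D⁻¹ * Υt)))))⁻¹ * (Φᴴ * (A⁻¹ * (Φ * (Υtᴴ * D⁻¹)))))) := Matrix.inv_eq_right_inv hSW4
  -- block form of H - z•1 and its inverse
  have hXeq : fromBlocks H₁ (-(Φ * Υtᴴ)) (-(Υt * Φᴴ)) H₂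
      - z • (1 : Matrix (Fin n₁ ⊕ Fin n₂) (Fin n₁ ⊕ Fin n₂) ℂ)
      = fromBlocks A (-(Φ * Υtᴴ)) (-(Υt * Φᴴ)) D := by
    rw [hA, hD, ← Matrix.fromBlocks_one, Matrix.fromBlocks_smul, sub_eq_add_neg,
      Matrix.fromBlocks_neg, Matrix.fromBlocks_add]
    simp [sub_eq_add_neg]
  have hDE : D = S + Υt * (Φᴴ * (A⁻¹ * (Φ * Υtᴴ))) := by rw [hS, sub_add_cancel]
  have hXW : fromBlocks A (-(Φ * Υtᴴ)) (-(Υt * Φᴴ)) D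
      * fromBlocks (A⁻¹ + A⁻¹ * (Φ * (Υtᴴ * (S⁻¹ * (Υt * (Φᴴ * A⁻¹)))))) (A⁻¹ * (Φ * (Υtᴴ * S⁻¹))) (S⁻¹ * (Υt * (Φᴴ * A⁻¹))) (S⁻¹) = 1 := by
    rw [Matrix.fromBlocks_multiply, ← Matrix.fromBlocks_one, Matrix.fromBlocks_inj]
    refine ⟨?_, ?_, ?_, ?_⟩
    · simp only [Matrix.mul_add, cancelA, Matrix.mul_nonsing_inv A hAd, Matrix.neg_mul,
        Matrix.mul_assoc]
      abel
    · simp only [Matrix.mul_add, cancelA, Matrix.neg_mul, Matrix.mul_assoc]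
      abel
    · rw [hDE]
      simp only [Matrix.neg_mul, Matrix.mul_add, Matrix.add_mul, cancelS, Matrix.mul_assoc]
      abel
    · rw [hDE]
      simp only [Matrix.neg_mul, Matrix.mul_add, Matrix.add_mul, cancelS, Matrix.mul_assoc,
        Matrix.mul_nonsing_inv S hSd]
      abel
  constructor
  · show IsUnit _
    simp only [Suitable, Matrix.toBlocks_fromBlocks₁₁, Matrix.toBlocks_fromBlocks₂₂,
      Matrix.mul_assoc]
    exact hTu
  · rw [hXeq, Matrix.inv_eq_right_inv hXW, Matrix.fromBlocks_multiply,
      Matrix.fromBlocks_multiply]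
    simp only [tri, Matrix.toBlocks_fromBlocks₁₁, Matrix.toBlocks_fromBlocks₁₂,
      Matrix.toBlocks_fromBlocks₂₁, Matrix.toBlocks_fromBlocks₂₂,
      Matrix.zero_mul, Matrix.mul_zero, add_zero, zero_add]
    rw [Matrix.fromBlocks_inj]
    refine ⟨?_, ?_, ?_, ?_⟩
    · simp only [Matrix.mul_add, Matrix.add_mul, Matrix.mul_assoc]
      rw [h2 q (Υt * (Φᴴ * (A⁻¹ * Υ)))]
    · simp only [Matrix.mul_add, Matrix.add_mul, Matrix.mul_assoc]
      rw [h2 s Φt]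
    · simp only [Matrix.mul_add, Matrix.add_mul, Matrix.mul_assoc]
      rw [h3 q (Φᴴ * (A⁻¹ * Υ))]
    · rw [Matrix.mul_assoc, h4]
      simp only [Matrix.mul_add, Matrix.add_mul, Matrix.mul_assoc]

end
end

section
/- Matrix Cayley-type parametrization of shifted inverses: Let δ ∈ ℂ^{r×r} be such that I := Im(δ) = (δ − δ^*)/(2i) is positive definite. Then { (B − δ)^{-1} : B ∈ ℂ^{r×r} with Im(B) negative definite } = { (i/2)·I^{-1} + (1/2)·I^{-1/2} R I^{-1/2} : R ∈ ℂ^{r×r} with 1_r − R^*R positive definite }. (Here for Im(B) negative definite the matrix B − δ is invertible since Im(B − δ) is negative definite, and I^{-1/2} denotes the inverse of the positive definite square root of I.) -/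
/-!
Write `J = Im δ`. For invertible `A` and `X = A⁻¹` one has `Im X = Xᴴ (-Im A) X`, so with
`A = B - δ` the matrix `Im X - Xᴴ J X = Xᴴ (-Im B) X` is positive definite exactly when `-Im B`
is. Conversely, if `Im X - Xᴴ J X > 0` then `Im X > 0`, so `X` is invertible and `B = X⁻¹ + δ`.
Hence the left-hand set is `{X | Im X - Xᴴ J X > 0}`. With `S = J^{1/2}` and `R = 2 S X S - i`,
`1 - Rᴴ R = (2S)ᴴ (Im X - Xᴴ J X) (2S)`, and `R ↦ (i/2) J⁻¹ + ½ S⁻¹ R S⁻¹` inverts `X ↦ R`.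
-/

open Matrix
open scoped ComplexOrder

noncomputable section

/-- The square root of a positive semidefinite matrix, as `Matrix.PosSemidef.sqrt` was defined
in the older Mathlib. -/
def posSemidefSqrt {n : Type*} [Fintype n] [DecidableEq n] {A : Matrix n n ℂ}
    (hA : A.PosSemidef) : Matrix n n ℂ :=
  hA.1.eigenvectorUnitary.1 * diagonal ((↑) ∘ (√·) ∘ hA.1.eigenvalues) *
    (star hA.1.eigenvectorUnitary : Matrix n n ℂ)

open scoped MatrixOrder

section matIm

variable {n : Type*}

lemma matIm_add (M N : Matrix n n ℂ) : matIm (M + N) = matIm M + matIm N := by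
  rw [matIm, matIm, matIm, conjTranspose_add, ← smul_add, add_sub_add_comm]

lemma matIm_sub (M N : Matrix n n ℂ) : matIm (M - N) = matIm M - matIm N := by
  rw [matIm, matIm, matIm, conjTranspose_sub, ← smul_sub, sub_sub_sub_comm]

variable [Fintype n]

lemma matIm_conjTranspose_mul_mul (C X : Matrix n n ℂ) :
    matIm (Cᴴ * X * C) = Cᴴ * matIm X * C := by
  simp only [matIm, conjTranspose_mul, conjTranspose_conjTranspose, Matrix.mul_smul,
    Matrix.smul_mul, Matrix.mul_sub, Matrix.sub_mul, Matrix.mul_assoc]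

lemma matIm_mul_mul_sub_conjTranspose_mul_self {S J : Matrix n n ℂ} (hS : Sᴴ = S) (hSS : S * S = J)
    (X : Matrix n n ℂ) :
    matIm (S * X * S) - (S * X * S)ᴴ * (S * X * S) = S * (matIm X - Xᴴ * J * X) * S := by
  have hIm : matIm (S * X * S) = S * matIm X * S := by
    simpa only [hS] using matIm_conjTranspose_mul_mul S X
  rw [hIm]
  simp only [conjTranspose_mul, hS, Matrix.mul_sub, Matrix.sub_mul, Matrix.mul_assoc, ← hSS]

lemma isUnit_of_posDef_matIm [DecidableEq n] {X : Matrix n n ℂ} (h : (matIm X).PosDef) :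
    IsUnit X := by
  rw [isUnit_iff_isUnit_det, isUnit_iff_ne_zero]
  intro hdet
  obtain ⟨v, hv, hXv⟩ := exists_mulVec_eq_zero_iff.mpr hdet
  have hpos := h.dotProduct_mulVec_pos hv
  rw [matIm, smul_mulVec, sub_mulVec, hXv, dotProduct_smul, dotProduct_sub,
    dotProduct_mulVec, ← star_mulVec, hXv] at hpos
  simp at hpos

lemma matIm_nonsing_inv [DecidableEq n] {A : Matrix n n ℂ} (hA : IsUnit A) :
    matIm A⁻¹ = -(A⁻¹ᴴ * matIm A * A⁻¹) := by
  have hAA : A * A⁻¹ = 1 := mul_nonsing_inv A ((isUnit_iff_isUnit_det A).mp hA)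
  have h₁ : A⁻¹ᴴ * A * A⁻¹ = A⁻¹ᴴ := by rw [Matrix.mul_assoc, hAA, Matrix.mul_one]
  have h₂ : A⁻¹ᴴ * Aᴴ * A⁻¹ = A⁻¹ := by
    rw [← conjTranspose_mul, hAA, conjTranspose_one, Matrix.one_mul]
  rw [matIm, matIm, Matrix.mul_smul, Matrix.smul_mul, Matrix.mul_sub, Matrix.sub_mul, h₁, h₂,
    ← smul_neg, neg_sub]

end matIm

variable {n : Type*} [Fintype n] [DecidableEq n]

lemma matIm_nonsing_inv_sub {A : Matrix n n ℂ} (hA : IsUnit A) (δ : Matrix n n ℂ) :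
    matIm A⁻¹ - A⁻¹ᴴ * matIm δ * A⁻¹ = A⁻¹ᴴ * -matIm (A + δ) * A⁻¹ := by
  rw [matIm_nonsing_inv hA, matIm_add, neg_add, Matrix.mul_add, Matrix.add_mul, Matrix.mul_neg,
    Matrix.neg_mul, Matrix.mul_neg, Matrix.neg_mul, sub_eq_add_neg]

theorem setOf_exists_inv_sub_eq {δ : Matrix n n ℂ} (hδ : (matIm δ).PosSemidef) :
    {X | ∃ B : Matrix n n ℂ, (-(matIm B)).PosDef ∧ X = (B - δ)⁻¹} =
      {X | (matIm X - Xᴴ * matIm δ * X).PosDef} := by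
  ext X
  constructor
  · rintro ⟨B, hB, rfl⟩
    have hBδ : IsUnit (B - δ) := by
      rw [← neg_sub, IsUnit.neg_iff]
      refine isUnit_of_posDef_matIm ?_
      rw [matIm_sub, sub_eq_neg_add]
      exact hB.add_posSemidef hδ
    rw [Set.mem_ofPred_eq, matIm_nonsing_inv_sub hBδ, sub_add_cancel]
    exact hB.conjTranspose_mul_mul_same
      (mulVec_injective_of_isUnit (isUnit_nonsing_inv_iff.mpr hBδ))
  · intro hX
    have hXu : IsUnit X := isUnit_of_posDef_matIm <| by
      simpa using hX.add_posSemidef (hδ.conjTranspose_mul_mul_same X)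
    obtain ⟨A, hA, rfl⟩ : ∃ A, IsUnit A ∧ X = A⁻¹ :=
      ⟨X⁻¹, isUnit_nonsing_inv_iff.mpr hXu,
        (nonsing_inv_nonsing_inv _ (X.isUnit_iff_isUnit_det.mp hXu)).symm⟩
    refine ⟨A + δ, ?_, by rw [add_sub_cancel_right]⟩
    rw [Set.mem_ofPred_eq, matIm_nonsing_inv_sub hA] at hX
    exact (IsUnit.posDef_star_left_conjugate_iff (isUnit_nonsing_inv_iff.mpr hA)).mp hX

lemma one_sub_conjTranspose_mul_self_cayley (Y : Matrix n n ℂ) :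
    1 - ((2 : ℂ) • Y - Complex.I • 1)ᴴ * ((2 : ℂ) • Y - Complex.I • 1) =
      (4 : ℂ) • (matIm Y - Yᴴ * Y) := by
  simp only [matIm, conjTranspose_sub, conjTranspose_smul, conjTranspose_one, Complex.star_def,
    Complex.conj_I, Complex.conj_ofNat, Matrix.sub_mul, Matrix.mul_sub, Matrix.smul_mul,
    Matrix.mul_smul, Matrix.one_mul, Matrix.mul_one, smul_sub, smul_smul]
  match_scalars <;> field_simp <;> ring_nf <;> simp only [Complex.I_sq] <;> ring

lemma eq_cayley_iff {S J : Matrix n n ℂ} (hS : IsUnit S) (hSS : S * S = J) (X R : Matrix n n ℂ) :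
    X = (Complex.I / 2) • J⁻¹ + (1 / 2 : ℂ) • (S⁻¹ * R * S⁻¹) ↔
      (2 : ℂ) • (S * X * S) - Complex.I • 1 = R := by
  have hSd : IsUnit S.det := (isUnit_iff_isUnit_det S).mp hS
  have hJ : J⁻¹ = S⁻¹ * S⁻¹ := by rw [← hSS, Matrix.mul_inv_rev]
  have hS₁ : ∀ M : Matrix n n ℂ, S⁻¹ * (S * M) = M := fun M => by
    rw [← Matrix.mul_assoc, nonsing_inv_mul S hSd, Matrix.one_mul]
  have hS₂ : ∀ M : Matrix n n ℂ, S * (S⁻¹ * M) = M := fun M => by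
    rw [← Matrix.mul_assoc, mul_nonsing_inv S hSd, Matrix.one_mul]
  constructor
  · rintro rfl
    simp only [Matrix.mul_add, Matrix.add_mul, Matrix.mul_smul, Matrix.smul_mul, Matrix.mul_assoc,
      Matrix.mul_one, hJ, hS₂, nonsing_inv_mul S hSd]
    module
  · rintro rfl
    simp only [Matrix.mul_sub, Matrix.sub_mul, Matrix.mul_smul, Matrix.smul_mul, Matrix.mul_one,
      Matrix.mul_assoc, hJ, hS₁, mul_nonsing_inv S hSd]
    module

theorem setOf_posDef_matIm_sub_eq_setOf_cayley {S J : Matrix n n ℂ} (hS : IsUnit S) (hSh : Sᴴ = S)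
    (hSS : S * S = J) :
    {X | (matIm X - Xᴴ * J * X).PosDef} =
      {X | ∃ R, (1 - Rᴴ * R).PosDef ∧
        X = (Complex.I / 2) • J⁻¹ + (1 / 2 : ℂ) • (S⁻¹ * R * S⁻¹)} := by
  have h2S : IsUnit ((2 : ℂ) • S) := by simpa using hS.smul (Units.mk0 (2 : ℂ) two_ne_zero)
  have key : ∀ X : Matrix n n ℂ,
      1 - ((2 : ℂ) • (S * X * S) - Complex.I • 1)ᴴ * ((2 : ℂ) • (S * X * S) - Complex.I • 1) =
        star ((2 : ℂ) • S) * (matIm X - Xᴴ * J * X) * ((2 : ℂ) • S) := fun X => by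
    rw [one_sub_conjTranspose_mul_self_cayley, matIm_mul_mul_sub_conjTranspose_mul_self hSh hSS,
      star_eq_conjTranspose, conjTranspose_smul, hSh, star_ofNat]
    simp only [Matrix.smul_mul, Matrix.mul_smul, smul_smul]
    norm_num
  ext X
  simp only [Set.mem_ofPred_eq]
  constructor
  · intro hX
    refine ⟨_, ?_, (eq_cayley_iff hS hSS X _).mpr rfl⟩
    rwa [key, h2S.posDef_star_left_conjugate_iff]
  · rintro ⟨R, hR, hX⟩
    rwa [← (eq_cayley_iff hS hSS X R).mp hX, key, h2S.posDef_star_left_conjugate_iff] at hR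

theorem posSemidefSqrt_eq_sqrt {A : Matrix n n ℂ} (hA : A.PosSemidef) :
    posSemidefSqrt hA = CFC.sqrt A := by
  rw [CFC.sqrt_eq_cfc, cfc_nnreal_eq_real _ A hA.nonneg, hA.1.cfc_eq]
  simp [IsHermitian.cfc, posSemidefSqrt, Function.comp_def, hA.eigenvalues_nonneg]

/-- Matrix Cayley-type parametrization of shifted inverses: for `δ` with
`I := Im(δ)` positive definite,
`{(B − δ)⁻¹ : Im(B) negative definite}
  = {(i/2)·I⁻¹ + (1/2)·I^{-1/2} R I^{-1/2} : 1 − R^*R positive definite}`. -/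
theorem cayley_parametrization {r : ℕ}
    (δ : Matrix (Fin r) (Fin r) ℂ) (hI : (matIm δ).PosDef) :
    {X : Matrix (Fin r) (Fin r) ℂ |
        ∃ B : Matrix (Fin r) (Fin r) ℂ, (-(matIm B)).PosDef ∧ X = (B - δ)⁻¹} =
    {X : Matrix (Fin r) (Fin r) ℂ |
        ∃ R : Matrix (Fin r) (Fin r) ℂ, (1 - Rᴴ * R).PosDef ∧
          X = (Complex.I / 2) • (matIm δ)⁻¹ +
            (1 / 2 : ℂ) • ((posSemidefSqrt hI.posSemidef)⁻¹ * R * (posSemidefSqrt hI.posSemidef)⁻¹)} := by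
  have hJ : 0 ≤ matIm δ := hI.posSemidef.nonneg
  have hsqrt := posSemidefSqrt_eq_sqrt hI.posSemidef
  rw [setOf_exists_inv_sub_eq hI.posSemidef]
  refine setOf_posDef_matIm_sub_eq_setOf_cayley ?_ ?_ ?_ <;> rw [hsqrt]
  · exact (CFC.isUnit_sqrt_iff _ hJ).mpr hI.isUnit
  · exact (CFC.sqrt_nonneg _).isSelfAdjoint
  · exact CFC.sqrt_mul_sqrt_self _ hJ

end
end

section
/- Entropy lower bound for weak limits of measures (Deift–Killip type lemma): Let Ω ⊆ ℝ be open, let w : Ω → [0,∞) be locally Lebesgue-integrable and Lebesgue-almost everywhere positive on Ω, let (μ_n) be finite positive Borel measures on ℝ converging weakly to a finite positive Borel measure μ (meaning ∫f dμ_n → ∫f dμ for every bounded continuous f : ℝ → ℝ), and let K ⊆ Ω be compact with positive Lebesgue measure. Set w(K) := ∫_K w(λ) dλ > 0 and let dμ_n/dλ denote the Radon–Nikodym derivative of μ_n with respect to Lebesgue measure (defined Lebesgue-a.e. via the Lebesgue decomposition). Then, with values in the extended reals, liminf_{n→∞} (1/w(K)) ∫_K −log( (dμ_n/dλ)(λ)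 / w(λ) ) · w(λ) dλ ≥ log( w(K) / μ(K) ), where the right-hand side is interpreted as +∞ when μ(K) = 0. -/
/-!
The tangent line of `-log` at `c > 0` gives, pointwise, `-log (d / w) * w ≥ (1 - log c) * w - d / c`.
Integrating over `K` and using `∫_K dμₙ/dλ ≤ μₙ(K)`, the choice `c = m / w(K)` yields
`(1 / w(K)) ∫_K -log (dμₙ/dλ / w) w ≥ log (w(K) / m)` whenever `μₙ(K) ≤ m`.
By the portmanteau theorem `limsup μₙ(K) ≤ μ(K)` for the closed set `K`, so every `m > μ(K)`
eventually dominates `μₙ(K)`; letting `m ↓ μ(K)` gives the bound.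
-/

open MeasureTheory Filter
open scoped ENNReal

noncomputable section

/-- The nonnegative (upper) part of an extended real, as an extended
nonnegative real. -/
def erealPos (x : EReal) : ℝ≥0∞ :=
  if x = ⊤ then ⊤ else ENNReal.ofReal x.toReal

/-- The integral of an extended-real-valued function, in the extended sense:
the (lower) integral of its positive part minus the (lower) integral of its
negative part. -/
def extIntegral (f : ℝ → EReal) (μ : Measure ℝ) : EReal :=
  ((∫⁻ x, erealPos (f x) ∂μ : ℝ≥0∞) : EReal) - ((∫⁻ x, erealPos (-(f x)) ∂μ : ℝ≥0∞) : EReal)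

/-- The entropy-type integrand `−log((dμ/dλ)(l)/w(l))·w(l)`, with values in
the extended reals (`log 0 = −∞`, `log ∞ = +∞`). -/
def entropyIntegrand (d : ℝ → ℝ≥0∞) (w : ℝ → ℝ) (l : ℝ) : EReal :=
  (-(ENNReal.log (d l / ENNReal.ofReal (w l)))) * ((w l : ℝ) : EReal)

open Topology

lemma erealPos_mono : Monotone erealPos := by
  intro x y h
  unfold erealPos
  split_ifs with hx hy hy
  · exact le_rfl
  · exact absurd (top_le_iff.mp (hx ▸ h)) hy
  · exact le_top
  · rcases eq_or_ne x ⊥ with rfl | hxb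
    · simp
    · exact ENNReal.ofReal_le_ofReal (EReal.toReal_le_toReal h hxb hy)

lemma erealPos_coe (x : ℝ) : erealPos x = ENNReal.ofReal x := by
  simp [erealPos]

lemma extIntegral_mono_ae {f g : ℝ → EReal} {μ : Measure ℝ} (h : f ≤ᵐ[μ] g) :
    extIntegral f μ ≤ extIntegral g μ := by
  refine EReal.sub_le_sub ?_ ?_
  · exact_mod_cast lintegral_mono_ae (h.mono fun x hx => erealPos_mono hx)
  · exact_mod_cast lintegral_mono_ae
      (h.mono fun x hx => erealPos_mono (EReal.neg_le_neg_iff.mpr hx))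

lemma MeasureTheory.Integrable.lintegral_ofReal_ne_top {α : Type*} [MeasurableSpace α] {μ : Measure α}
    {f : α → ℝ} (hf : Integrable f μ) : ∫⁻ x, ENNReal.ofReal (f x) ∂μ ≠ ⊤ :=
  ne_top_of_le_ne_top hf.2.ne (lintegral_mono fun x => Real.ofReal_le_enorm (f x))

lemma extIntegral_coe {f : ℝ → ℝ} {μ : Measure ℝ} (hf : Integrable f μ) :
    extIntegral (fun x => (f x : EReal)) μ = ((∫ x, f x ∂μ : ℝ) : EReal) := by
  have hneg : ∫⁻ x, ENNReal.ofReal (-f x) ∂μ ≠ ⊤ := hf.neg.lintegral_ofReal_ne_top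
  rw [integral_eq_lintegral_pos_part_sub_lintegral_neg_part hf, EReal.coe_sub,
    EReal.coe_ennreal_toReal hf.lintegral_ofReal_ne_top, EReal.coe_ennreal_toReal hneg]
  simp only [extIntegral, ← EReal.coe_neg, erealPos_coe]

/-- The tangent-line bound `-log t ≥ 1 - log c - t / c` at `t = d / w`, multiplied by `w`. -/
lemma tangent_le_neg_log_div_mul {d : ℝ≥0∞} {w c : ℝ} (hw : 0 < w) (hc : 0 < c) (hd : d ≠ ⊤) :
    (((1 - Real.log c) * w - d.toReal / c : ℝ) : EReal)
      ≤ -ENNReal.log (d / ENNReal.ofReal w) * (w : EReal) := by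
  obtain ⟨t, ht, rfl⟩ : ∃ t, 0 ≤ t ∧ d = ENNReal.ofReal t :=
    ⟨d.toReal, ENNReal.toReal_nonneg, (ENNReal.ofReal_toReal hd).symm⟩
  rw [ENNReal.toReal_ofReal ht, ← ENNReal.ofReal_div_of_pos hw]
  rcases ht.eq_or_lt with rfl | ht
  · simp [EReal.top_mul_coe_of_pos hw]
  rw [ENNReal.log_ofReal_of_pos (div_pos ht hw), ← EReal.coe_neg, ← EReal.coe_mul,
    EReal.coe_le_coe_iff]
  have hlog := Real.log_le_sub_one_of_pos (show 0 < t / w / c by positivity)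
  rw [Real.log_div (by positivity) hc.ne'] at hlog
  have hscale : t / w / c * w = t / c := by field_simp
  nlinarith [mul_le_mul_of_nonneg_right hlog hw.le]

lemma MeasureTheory.setIntegral_pos_of_ae_pos {α : Type*} [MeasurableSpace α] {μ : Measure α}
    {s : Set α} {f : α → ℝ} (hf : IntegrableOn f s μ) (hpos : ∀ᵐ x ∂μ.restrict s, 0 < f x)
    (hs : μ s ≠ 0) : 0 < ∫ x in s, f x ∂μ := by
  rw [integral_pos_iff_support_of_nonneg_ae (hpos.mono fun _ hx => hx.le) hf,
    measure_congr ((eventuallyEq_univ (s := Function.support f)).mpr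
      (hpos.mono fun _ hx => hx.ne')),
    Measure.restrict_apply_univ]
  exact pos_iff_ne_zero.mpr hs

section

variable {ρ μ : Measure ℝ} {K : Set ℝ} {w : ℝ → ℝ}

lemma affine_le_extIntegral_entropyIntegrand (hw : IntegrableOn w K ρ)
    (hwpos : ∀ᵐ x ∂ρ.restrict K, 0 < w x) (hμK : μ K ≠ ⊤) {c : ℝ} (hc : 0 < c) :
    (((1 - Real.log c) * (∫ x in K, w x ∂ρ) - (μ K).toReal / c : ℝ) : EReal)
      ≤ extIntegral (entropyIntegrand (μ.rnDeriv ρ) w) (ρ.restrict K) := by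
  set d := μ.rnDeriv ρ
  have hd : AEMeasurable d (ρ.restrict K) := (Measure.measurable_rnDeriv μ ρ).aemeasurable
  have hdK : ∫⁻ x in K, d x ∂ρ ≤ μ K := Measure.setLIntegral_rnDeriv_le K
  have hdK_ne_top : ∫⁻ x in K, d x ∂ρ ≠ ⊤ := ne_top_of_le_ne_top hμK hdK
  have hd_lt_top : ∀ᵐ x ∂ρ.restrict K, d x < ⊤ := ae_lt_top' hd hdK_ne_top
  have hd_int : Integrable (fun x => (d x).toReal) (ρ.restrict K) :=
    integrable_toReal_of_lintegral_ne_top hd hdK_ne_top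
  have h_int : Integrable (fun x => (1 - Real.log c) * w x - (d x).toReal / c) (ρ.restrict K) :=
    (hw.const_mul _).sub (hd_int.div_const c)
  calc (((1 - Real.log c) * (∫ x in K, w x ∂ρ) - (μ K).toReal / c : ℝ) : EReal)
      ≤ ((∫ x in K, ((1 - Real.log c) * w x - (d x).toReal / c) ∂ρ : ℝ) : EReal) := by
        rw [integral_sub (hw.const_mul _) (hd_int.div_const c), integral_const_mul,
          integral_div, integral_toReal hd hd_lt_top, EReal.coe_le_coe_iff]
        gcongr
    _ = extIntegral (fun x => (((1 - Real.log c) * w x - (d x).toReal / c : ℝ) : EReal))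
          (ρ.restrict K) := (extIntegral_coe h_int).symm
    _ ≤ extIntegral (entropyIntegrand d w) (ρ.restrict K) := by
        refine extIntegral_mono_ae ?_
        filter_upwards [hwpos, hd_lt_top] with x hwx hdx
        exact tangent_le_neg_log_div_mul hwx hc hdx.ne

/-- Jensen's inequality for `-log`, via the tangent line at `m / w(K)`. -/
lemma log_div_le_extIntegral_entropyIntegrand (hw : IntegrableOn w K ρ)
    (hwpos : ∀ᵐ x ∂ρ.restrict K, 0 < w x) (hW : 0 < ∫ x in K, w x ∂ρ) {m : ℝ≥0∞}
    (hm0 : m ≠ 0) (hm : m ≠ ⊤) (hμm : μ K ≤ m) :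
    ENNReal.log (ENNReal.ofReal (∫ x in K, w x ∂ρ) / m)
      ≤ (((∫ x in K, w x ∂ρ)⁻¹ : ℝ) : EReal) *
          extIntegral (entropyIntegrand (μ.rnDeriv ρ) w) (ρ.restrict K) := by
  set W := ∫ x in K, w x ∂ρ
  have hm_pos : 0 < m.toReal := ENNReal.toReal_pos hm0 hm
  have hW_inv : 0 < W⁻¹ := inv_pos.mpr hW
  have hμm' : (μ K).toReal ≤ m.toReal := ENNReal.toReal_mono hm hμm
  have hbound := affine_le_extIntegral_entropyIntegrand hw hwpos (ne_top_of_le_ne_top hm hμm)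
    (div_pos hm_pos hW)
  have hlog : ENNReal.log (ENNReal.ofReal W / m) = Real.log (W / m.toReal) := by
    rw [← ENNReal.ofReal_toReal hm, ← ENNReal.ofReal_div_of_pos hm_pos,
      ENNReal.log_ofReal_of_pos (by positivity), ENNReal.toReal_ofReal hm_pos.le]
  rw [hlog]
  refine le_trans ?_ (mul_le_mul_of_nonneg_left hbound (by exact_mod_cast hW_inv.le))
  rw [← EReal.coe_mul, EReal.coe_le_coe_iff]
  calc Real.log (W / m.toReal)
      = W⁻¹ * ((1 - Real.log (m.toReal / W)) * W - m.toReal / (m.toReal / W)) := by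
        rw [Real.log_div hW.ne' hm_pos.ne', Real.log_div hm_pos.ne' hW.ne']
        field_simp
        ring
    _ ≤ W⁻¹ * ((1 - Real.log (m.toReal / W)) * W - (μ K).toReal / (m.toReal / W)) := by
        gcongr

end

lemma ENNReal.log_div_le_of_forall_lt {a b : ℝ≥0∞} {L : EReal} (ha : a ≠ ⊤) (hb : b ≠ ⊤)
    (h : ∀ m, b < m → m ≠ ⊤ → ENNReal.log (a / m) ≤ L) : ENNReal.log (a / b) ≤ L := by
  have hlim : Tendsto (fun m => ENNReal.log (a / m)) (𝓝[>] b) (𝓝 (ENNReal.log (a / b))) :=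
    (ENNReal.continuous_log.tendsto _).comp
      (ENNReal.Tendsto.const_div (tendsto_nhdsWithin_of_tendsto_nhds tendsto_id) (Or.inr ha))
  have : (𝓝[>] b).NeBot := nhdsGT_neBot_of_exists_gt ⟨⊤, hb.lt_top⟩
  refine le_of_tendsto hlim ?_
  filter_upwards [self_mem_nhdsWithin, nhdsWithin_le_nhds (Iio_mem_nhds hb.lt_top)]
    with m hbm hm using h m hbm hm.ne

lemma eventually_measure_lt_of_tendsto_integral {X ι : Type*} [MeasurableSpace X]
    [TopologicalSpace X] [HasOuterApproxClosed X] [OpensMeasurableSpace X] {l : Filter ι}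
    {μ : ι → Measure X} {ν : Measure X} [∀ i, IsFiniteMeasure (μ i)] [IsFiniteMeasure ν]
    (hweak : ∀ f : BoundedContinuousFunction X ℝ,
      Tendsto (fun i => ∫ x, f x ∂(μ i)) l (𝓝 (∫ x, f x ∂ν)))
    {F : Set X} (hF : IsClosed F) {m : ℝ≥0∞} (hm : ν F < m) : ∀ᶠ i in l, μ i F < m := by
  let μ' : ι → FiniteMeasure X := fun i => ⟨μ i, inferInstance⟩
  let ν' : FiniteMeasure X := ⟨ν, inferInstance⟩
  have hlim : Tendsto μ' l (𝓝 ν') := FiniteMeasure.tendsto_iff_forall_integral_tendsto.mpr hweak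
  exact eventually_lt_of_limsup_lt
    ((FiniteMeasure.limsup_measure_closed_le_of_tendsto hlim hF).trans_lt hm)

theorem entropy_lower_bound_weak_limit_general {Ω : Set ℝ} (w : ℝ → ℝ)
    (hwloc : LocallyIntegrableOn w Ω)
    (hwpos : ∀ᵐ x ∂(volume.restrict Ω), 0 < w x)
    (μ : ℕ → Measure ℝ) (ν : Measure ℝ)
    [∀ n, IsFiniteMeasure (μ n)] [IsFiniteMeasure ν]
    (hweak : ∀ f : BoundedContinuousFunction ℝ ℝ,
      Tendsto (fun n => ∫ x, f x ∂(μ n)) atTop (nhds (∫ x, f x ∂ν)))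
    (K : Set ℝ) (hK : IsCompact K) (hKΩ : K ⊆ Ω) (hKpos : 0 < volume K) :
    atTop.liminf (fun n =>
        (((∫ x in K, w x)⁻¹ : ℝ) : EReal) *
          extIntegral (entropyIntegrand ((μ n).rnDeriv volume) w) (volume.restrict K))
      ≥ ENNReal.log (ENNReal.ofReal (∫ x in K, w x) / ν K) := by
  have hwK : ∀ᵐ x ∂(volume.restrict K), 0 < w x :=
    ae_restrict_of_ae_restrict_of_subset hKΩ hwpos
  have hw_int : IntegrableOn w K := hwloc.integrableOn_compact_subset hKΩ hK
  have hW : 0 < ∫ x in K, w x := setIntegral_pos_of_ae_pos hw_int hwK hKpos.ne'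
  refine ENNReal.log_div_le_of_forall_lt ENNReal.ofReal_ne_top (measure_ne_top ν K)
    fun m hνm hm => le_liminf_of_le (by isBoundedDefault) ?_
  filter_upwards [eventually_measure_lt_of_tendsto_integral hweak hK.isClosed hνm] with n hn
  exact log_div_le_extIntegral_entropyIntegrand hw_int hwK hW (ne_bot_of_gt hνm) hm hn.le

/-- Entropy lower bound for weak limits of measures (Deift–Killip type
lemma). -/
theorem entropy_lower_bound_weak_limit {Ω : Set ℝ} (hΩ : IsOpen Ω)
    (w : ℝ → ℝ) (hw0 : ∀ x ∈ Ω, 0 ≤ w x)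
    (hwloc : LocallyIntegrableOn w Ω)
    (hwpos : ∀ᵐ x ∂(volume.restrict Ω), 0 < w x)
    (μ : ℕ → Measure ℝ) (ν : Measure ℝ)
    [∀ n, IsFiniteMeasure (μ n)] [IsFiniteMeasure ν]
    (hweak : ∀ f : BoundedContinuousFunction ℝ ℝ,
      Tendsto (fun n => ∫ x, f x ∂(μ n)) atTop (nhds (∫ x, f x ∂ν)))
    (K : Set ℝ) (hK : IsCompact K) (hKΩ : K ⊆ Ω) (hKpos : 0 < volume K) :
    atTop.liminf (fun n =>
        (((∫ x in K, w x)⁻¹ : ℝ) : EReal) *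
          extIntegral (entropyIntegrand ((μ n).rnDeriv volume) w) (volume.restrict K))
      ≥ ENNReal.log (ENNReal.ofReal (∫ x in K, w x) / ν K) :=
  entropy_lower_bound_weak_limit_general w hwloc hwpos μ ν hweak K hK hKΩ hKpos

end
end

section
/- Existence of a transfer matrix moving boundary data one step: Let q ≤ r and Q = [[α,β],[γ,δ]] ∈ 𝓜_⊲(q,r). Suppose u, v₋ ∈ ℂ^q and u₊, v₊ ∈ ℂ^r satisfy u = αv₋ + βu₊ and v₊ = γv₋ + δu₊, and suppose (u, v₋) ≠ (0, 0). Then there exists a transfer matrix T ∈ 𝕋_Q such that (u₊; v₊) = T·(u; v₋), where (u; v₋) ∈ ℂ^{2q} and (u₊; v₊) ∈ ℂ^{2r} denote the stacked column vectors. -/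
open Matrix

noncomputable section

/-!
Stack `B` and `-𝔟` into one `r × 2q` matrix `M = [B | -𝔟]`. The conditions `B ∈ 𝔹_Q`, `𝔟 ∈ 𝔉_Q`
become the single linear equation `β M = [1 | -α]`, and the first block row of `T (u; v₋)` is
`M (u; v₋)`. One solution is `B₀ [1 | -α]` for a right inverse `B₀` of `β`; since `(u; v₋) ≠ 0`,
adding a rank-one matrix with columns in `ker β` moves `M (u; v₋)` to any vector with the right
image under `β`, in particular to `u₊`. The second block row then is `v₊` automatically.
-/

section

variable {K m n p : Type*} [Field K] [Fintype n] [Fintype p]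

theorem exists_dotProduct_eq_one {z : n → K} (hz : z ≠ 0) : ∃ f : n → K, f ⬝ᵥ z = 1 := by
  classical
  obtain ⟨i, hi⟩ := Function.ne_iff.mp hz
  exact ⟨Pi.single i (z i)⁻¹, by simp [single_dotProduct, inv_mul_cancel₀ hi]⟩

theorem exists_mul_eq_and_mulVec_eq {β : Matrix m p K} {A : Matrix m n K} {M₀ : Matrix p n K}
    (hM₀ : β * M₀ = A) {z : n → K} (hz : z ≠ 0) {y : p → K} (hy : β *ᵥ y = A *ᵥ z) :
    ∃ M : Matrix p n K, β * M = A ∧ M *ᵥ z = y := by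
  obtain ⟨f, hf⟩ := exists_dotProduct_eq_one hz
  have hker : β *ᵥ (y - M₀ *ᵥ z) = 0 := by
    rw [mulVec_sub, mulVec_mulVec, hM₀, hy, sub_self]
  refine ⟨M₀ + vecMulVec (y - M₀ *ᵥ z) f, ?_, ?_⟩
  · rw [Matrix.mul_add, hM₀, mul_vecMulVec, hker, zero_vecMulVec, add_zero]
  · simp [add_mulVec, vecMulVec_mulVec, hf]

end

theorem fromBlocks_transfer_mulVec {K q r : Type*} [CommRing K] [Fintype q] [Fintype r]
    (B b γ : Matrix r q K) (δ : Matrix r r K) (u v : q → K) :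
    fromBlocks B (-b) (δ * B) (γ - δ * b) *ᵥ Sum.elim u v =
      Sum.elim (B *ᵥ u - b *ᵥ v) (γ *ᵥ v + δ *ᵥ (B *ᵥ u - b *ᵥ v)) := by
  rw [fromBlocks_mulVec]
  congr 1
  · simp [neg_mulVec, sub_eq_add_neg]
  · simp only [Sum.elim_comp_inl, Sum.elim_comp_inr, sub_mulVec, ← mulVec_mulVec, mulVec_sub]
    abel

theorem exists_transfer_matrix_general {q r : ℕ}
    (Q : Matrix (Fin q ⊕ Fin r) (Fin q ⊕ Fin r) ℂ)
    (hQ : MSub Q)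
    (u vm : Fin q → ℂ) (up vp : Fin r → ℂ)
    (h1 : u = Q.toBlocks₁₁.mulVec vm + Q.toBlocks₁₂.mulVec up)
    (h2 : vp = Q.toBlocks₂₁.mulVec vm + Q.toBlocks₂₂.mulVec up)
    (hne : ¬(u = 0 ∧ vm = 0)) :
    ∃ T ∈ TTSet Q, T.mulVec (Sum.elim u vm) = Sum.elim up vp := by
  set A : Matrix (Fin q) (Fin q ⊕ Fin q) ℂ := fromCols 1 (-Q.toBlocks₁₁) with hA
  obtain ⟨B₀, hB₀⟩ := mulVec_surjective_iff_exists_right_inverse.mp hQ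
  have hz : Sum.elim u vm ≠ 0 := fun h ↦
    hne ⟨funext fun i ↦ congrFun h (.inl i), funext fun i ↦ congrFun h (.inr i)⟩
  have hy : Q.toBlocks₁₂ *ᵥ up = A *ᵥ Sum.elim u vm := by simp [hA, neg_mulVec, h1]
  obtain ⟨M, hM, hMz⟩ := exists_mul_eq_and_mulVec_eq (M₀ := B₀ * A)
    (by rw [← Matrix.mul_assoc, hB₀, Matrix.one_mul]) hz hy
  rw [hA, ← fromCols_toCols M, mul_fromCols, fromCols_ext_iff] at hM
  rw [← fromCols_toCols M, fromCols_mulVec_sumElim] at hMz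
  refine ⟨_, ⟨M.toCols₁, hM.1, -M.toCols₂, ?_, rfl⟩, ?_⟩
  · change Q.toBlocks₁₂ * -M.toCols₂ = Q.toBlocks₁₁
    rw [Matrix.mul_neg, hM.2, neg_neg]
  · rw [fromBlocks_transfer_mulVec, neg_mulVec, sub_neg_eq_add, hMz, h2]

/-- Existence of a transfer matrix moving boundary data one step: if
`u = α v₋ + β u₊` and `v₊ = γ v₋ + δ u₊` with `(u, v₋) ≠ (0,0)`, then there is
`T ∈ 𝕋_Q` with `(u₊; v₊) = T (u; v₋)`. -/
theorem exists_transfer_matrix {q r : ℕ} (hqr : q ≤ r)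
    (Q : Matrix (Fin q ⊕ Fin r) (Fin q ⊕ Fin r) ℂ)
    (hQ : MSub Q)
    (u vm : Fin q → ℂ) (up vp : Fin r → ℂ)
    (h1 : u = Q.toBlocks₁₁.mulVec vm + Q.toBlocks₁₂.mulVec up)
    (h2 : vp = Q.toBlocks₂₁.mulVec vm + Q.toBlocks₂₂.mulVec up)
    (hne : ¬(u = 0 ∧ vm = 0)) :
    ∃ T ∈ TTSet Q, T.mulVec (Sum.elim u vm) = Sum.elim up vp :=
  exists_transfer_matrix_general Q hQ u vm up vp h1 h2 hne
end
end
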